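/- arXiv:2602.15679 — 11 statements merged into one kernel-verified Lean document; each statement's English description precedes it below -/
import Mathlib

section
/- Let E be a real Hilbert space, L a closed linear subspace of E, and C a nonempty closed convex cone in E with L ⊆ C. Then for every θ ∈ E, ‖θ − P_L(θ)‖² − ‖θ − P_C(θ)‖² = ‖P_L(θ) − P_C(θ)‖². -/
/-!
If `p` is the nearest point of a convex cone `C` to `θ`, the variational inequality
`⟪θ - p, w - p⟫ ≤ 0` on `C`, tested at `w = 0`, `w = 2p` and `w = p + c`, shows that the
residual `θ - p` is orthogonal to `p` and lies in the polar cone of `C`; hence it is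
orthogonal to every subspace `L ⊆ C`, in particular to `p - P_L θ`, and the identity is
Pythagoras for `θ - P_L θ = (θ - p) + (p - P_L θ)`.
-/

open RealInnerProductSpace

section ConvexCone

variable {E : Type*} [NormedAddCommGroup E] [InnerProductSpace ℝ E] {C : Set E}

theorem add_mem_of_convex_of_smul_mem (hconv : Convex ℝ C)
    (hcone : ∀ c ∈ C, ∀ r : ℝ, 0 ≤ r → r • c ∈ C) {a b : E} (ha : a ∈ C) (hb : b ∈ C) :
    a + b ∈ C := by
  have hmid : (1 / 2 : ℝ) • a + (1 / 2 : ℝ) • b ∈ C :=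
    hconv ha hb (by norm_num) (by norm_num) (by norm_num)
  simpa [smul_add, smul_smul] using hcone _ hmid 2 (by norm_num)

theorem inner_sub_le_zero_of_forall_norm_sub_le (hconv : Convex ℝ C) {x p : E} (hp : p ∈ C)
    (hmin : ∀ y ∈ C, ‖x - p‖ ≤ ‖x - y‖) : ∀ w ∈ C, ⟪x - p, w - p⟫ ≤ 0 := by
  have : Nonempty C := ⟨⟨p, hp⟩⟩
  refine (norm_eq_iInf_iff_real_inner_le_zero hconv hp).mp (le_antisymm ?_ ?_)
  · exact le_ciInf fun w => hmin w w.2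
  · exact ciInf_le (⟨0, by rintro _ ⟨w, rfl⟩; positivity⟩ : BddBelow _) (⟨p, hp⟩ : C)

variable (hconv : Convex ℝ C) (hcone : ∀ c ∈ C, ∀ r : ℝ, 0 ≤ r → r • c ∈ C)
  {x p : E} (hp : p ∈ C) (hmin : ∀ y ∈ C, ‖x - p‖ ≤ ‖x - y‖)
include hconv hcone hp hmin

theorem inner_sub_self_eq_zero_of_cone : ⟪x - p, p⟫ = 0 := by
  have hvar := inner_sub_le_zero_of_forall_norm_sub_le hconv hp hmin
  have hzero := hvar 0 (by simpa using hcone p hp 0 le_rfl)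
  have htwo := hvar ((2 : ℝ) • p) (hcone p hp 2 (by norm_num))
  rw [zero_sub, inner_neg_right] at hzero
  rw [two_smul, add_sub_cancel_right] at htwo
  linarith

theorem inner_sub_le_zero_of_cone : ∀ c ∈ C, ⟪x - p, c⟫ ≤ 0 := by
  intro c hc
  simpa using inner_sub_le_zero_of_forall_norm_sub_le hconv hp hmin (p + c)
    (add_mem_of_convex_of_smul_mem hconv hcone hp hc)

end ConvexCone

theorem inner_eq_zero_of_forall_inner_le_zero {E : Type*} [NormedAddCommGroup E]
    [InnerProductSpace ℝ E] {C : Set E} {v : E} (hv : ∀ c ∈ C, ⟪v, c⟫ ≤ 0)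
    {L : Submodule ℝ E} (hLC : (L : Set E) ⊆ C) {l : E} (hl : l ∈ L) : ⟪v, l⟫ = 0 := by
  have hneg := hv (-l) (hLC (L.neg_mem hl))
  rw [inner_neg_right] at hneg
  linarith [hv l (hLC hl)]

theorem stmt0_general {E : Type*} [NormedAddCommGroup E] [InnerProductSpace ℝ E]
    (L : Submodule ℝ E)
    (C : Set E) (hCconv : Convex ℝ C)
    (hCcone : ∀ c ∈ C, ∀ r : ℝ, 0 ≤ r → r • c ∈ C)
    (hLC : (L : Set E) ⊆ C)
    (PL PC : E → E)
    (hPL : ∀ x : E, PL x ∈ L ∧ ∀ y ∈ (L : Set E), ‖x - PL x‖ ≤ ‖x - y‖)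
    (hPC : ∀ x : E, PC x ∈ C ∧ ∀ y ∈ C, ‖x - PC x‖ ≤ ‖x - y‖) :
    ∀ θ : E, ‖θ - PL θ‖ ^ 2 - ‖θ - PC θ‖ ^ 2 = ‖PL θ - PC θ‖ ^ 2 := by
  intro θ
  obtain ⟨hPCmem, hPCmin⟩ := hPC θ
  have horth : ⟪θ - PC θ, PC θ - PL θ⟫ = 0 := by
    rw [inner_sub_right, inner_sub_self_eq_zero_of_cone hCconv hCcone hPCmem hPCmin,
      inner_eq_zero_of_forall_inner_le_zero
        (inner_sub_le_zero_of_cone hCconv hCcone hPCmem hPCmin) hLC (hPL θ).1, sub_zero]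
  have hpyth : ‖θ - PL θ‖ ^ 2 = ‖θ - PC θ‖ ^ 2 + ‖PC θ - PL θ‖ ^ 2 := by
    rw [← sub_add_sub_cancel θ (PC θ) (PL θ), norm_add_sq_real, horth]
    ring
  rw [hpyth, norm_sub_rev (PL θ)]
  ring

/-- Let E be a real Hilbert space, L a closed linear subspace of E, and C a
nonempty closed convex cone in E with L ⊆ C. Then for every θ ∈ E,
‖θ − P_L(θ)‖² − ‖θ − P_C(θ)‖² = ‖P_L(θ) − P_C(θ)‖². The metric projections are encoded
as functions `PL`, `PC` satisfying the nearest-point property. -/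
theorem stmt0 {E : Type*} [NormedAddCommGroup E] [InnerProductSpace ℝ E] [CompleteSpace E]
    (L : Submodule ℝ E) (hLclosed : IsClosed (L : Set E))
    (C : Set E) (hCne : C.Nonempty) (hCclosed : IsClosed C) (hCconv : Convex ℝ C)
    (hCcone : ∀ c ∈ C, ∀ r : ℝ, 0 ≤ r → r • c ∈ C)
    (hLC : (L : Set E) ⊆ C)
    (PL PC : E → E)
    (hPL : ∀ x : E, PL x ∈ L ∧ ∀ y ∈ (L : Set E), ‖x - PL x‖ ≤ ‖x - y‖)
    (hPC : ∀ x : E, PC x ∈ C ∧ ∀ y ∈ C, ‖x - PC x‖ ≤ ‖x - y‖) :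
    ∀ θ : E, ‖θ - PL θ‖ ^ 2 - ‖θ - PC θ‖ ^ 2 = ‖PL θ - PC θ‖ ^ 2 :=
  stmt0_general L C hCconv hCcone hLC PL PC hPL hPC
end

section
/- Let E be a real Hilbert space, L a closed linear subspace of E, and C a nonempty closed convex cone in E with L ⊆ C. Then for every θ ∈ E, the metric projections satisfy P_C(θ) = P_L(θ) + P_{C ∩ L⊥}(θ), where L⊥ is the orthogonal complement of L and C ∩ L⊥ is itself a nonempty closed convex cone. -/
/-!
A convex cone `C` containing `L` satisfies `C + L ⊆ C`. The nearest point `u` of a convex set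
`K` is characterised by the variational inequality `⟪θ - u, y - u⟫ ≤ 0` for all `y ∈ K`.
Splitting `y ∈ C` as `P_L y + (y - P_L y)` with `y - P_L y ∈ C ∩ Lᗮ`, the inequality for
`u = P_L θ + P_{C ∩ Lᗮ} θ` over `C` reduces to the one for `P_{C ∩ Lᗮ} θ` over `C ∩ Lᗮ`, because
`θ - u ⊥ L` and `P_L θ ⊥ Lᗮ`; uniqueness of solutions of the variational inequality concludes.
-/

open RealInnerProductSpace

lemma add_mem_of_convex_of_smul_mem_s1 {E : Type*} [AddCommGroup E] [Module ℝ E] {C : Set E}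
    (hconv : Convex ℝ C) (hcone : ∀ c ∈ C, ∀ r : ℝ, 0 ≤ r → r • c ∈ C) {c d : E}
    (hc : c ∈ C) (hd : d ∈ C) : c + d ∈ C := by
  have hmid : (1 / 2 : ℝ) • c + (1 / 2 : ℝ) • d ∈ C :=
    hconv hc hd (by norm_num) (by norm_num) (by norm_num)
  convert hcone _ hmid 2 (by norm_num) using 1
  module

section NearestPoint

variable {E : Type*} [NormedAddCommGroup E] [InnerProductSpace ℝ E]

lemma real_inner_sub_le_zero_of_forall_norm_sub_le {K : Set E} (hK : Convex ℝ K) {x u : E}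
    (hu : u ∈ K) (hmin : ∀ y ∈ K, ‖x - u‖ ≤ ‖x - y‖) : ∀ y ∈ K, ⟪x - u, y - u⟫ ≤ 0 := by
  have : Nonempty K := ⟨⟨u, hu⟩⟩
  refine (norm_eq_iInf_iff_real_inner_le_zero hK hu).1 (le_antisymm ?_ ?_)
  · exact le_ciInf fun w => hmin w w.2
  · exact ciInf_le ⟨0, by rintro _ ⟨w, rfl⟩; exact norm_nonneg _⟩ (⟨u, hu⟩ : K)

lemma sub_mem_orthogonal_of_forall_norm_sub_le (L : Submodule ℝ E) {x u : E} (hu : u ∈ L)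
    (hmin : ∀ y ∈ (L : Set E), ‖x - u‖ ≤ ‖x - y‖) : x - u ∈ Lᗮ := by
  have hvar := real_inner_sub_le_zero_of_forall_norm_sub_le L.convex hu hmin
  refine (L.mem_orthogonal' _).2 fun w hw => le_antisymm ?_ ?_
  · simpa using hvar (u + w) (L.add_mem hu hw)
  · simpa using hvar (u - w) (L.sub_mem hu hw)

lemma eq_of_real_inner_sub_le_zero {K : Set E} {x u v : E} (hu : u ∈ K) (hv : v ∈ K)
    (hu' : ∀ y ∈ K, ⟪x - u, y - u⟫ ≤ 0) (hv' : ∀ y ∈ K, ⟪x - v, y - v⟫ ≤ 0) : u = v := by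
  have hsq : ‖u - v‖ ^ 2 = ⟪x - v, u - v⟫ + ⟪x - u, v - u⟫ := by
    rw [← real_inner_self_eq_norm_sq, ← neg_sub u v, inner_neg_right, ← sub_eq_add_neg,
      ← inner_sub_left]
    congr 1
    abel
  have : ‖u - v‖ ^ 2 ≤ 0 := hsq ▸ add_nonpos (hv' u hu) (hu' v hv)
  rwa [sq_nonpos_iff, norm_eq_zero, sub_eq_zero] at this

lemma real_inner_sub_add_le_zero (L : Submodule ℝ E) [L.HasOrthogonalProjection] {C : Set E}
    (hCL : ∀ c ∈ C, ∀ l ∈ L, c + l ∈ C) {x p m : E} (hp : p ∈ L) (hxp : x - p ∈ Lᗮ)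
    (hm : m ∈ Lᗮ) (hmvar : ∀ y ∈ C ∩ (Lᗮ : Set E), ⟪x - m, y - m⟫ ≤ 0) :
    ∀ y ∈ C, ⟪x - (p + m), y - (p + m)⟫ ≤ 0 := by
  intro y hy
  set yL := L.starProjection y
  have hyL : yL ∈ L := L.starProjection_apply_mem y
  have hyO : y - yL ∈ Lᗮ := L.sub_starProjection_mem_orthogonal y
  have hyC : y - yL ∈ C := by simpa [sub_eq_add_neg] using hCL y hy (-yL) (L.neg_mem hyL)
  have hres : x - (p + m) ∈ Lᗮ := by
    rw [sub_add_eq_sub_sub]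
    exact Lᗮ.sub_mem hxp hm
  calc ⟪x - (p + m), y - (p + m)⟫
      = ⟪x - (p + m), yL - p⟫ + ⟪x - (p + m), (y - yL) - m⟫ := by
        rw [← inner_add_right]
        congr 1
        abel
    _ = ⟪x - m, (y - yL) - m⟫ := by
        rw [Submodule.inner_left_of_mem_orthogonal (L.sub_mem hyL hp) hres, zero_add,
          show x - (p + m) = (x - m) - p by abel, inner_sub_left,
          Submodule.inner_right_of_mem_orthogonal hp (Lᗮ.sub_mem hyO hm), sub_zero]
    _ ≤ 0 := hmvar _ ⟨hyC, hyO⟩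

end NearestPoint

theorem stmt1_general {E : Type*} [NormedAddCommGroup E] [InnerProductSpace ℝ E]
    (L : Submodule ℝ E)
    (C : Set E) (hCclosed : IsClosed C) (hCconv : Convex ℝ C)
    (hCcone : ∀ c ∈ C, ∀ r : ℝ, 0 ≤ r → r • c ∈ C)
    (hLC : (L : Set E) ⊆ C)
    (PL PC PI : E → E)
    (hPL : ∀ x : E, PL x ∈ L ∧ ∀ y ∈ (L : Set E), ‖x - PL x‖ ≤ ‖x - y‖)
    (hPC : ∀ x : E, PC x ∈ C ∧ ∀ y ∈ C, ‖x - PC x‖ ≤ ‖x - y‖)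
    (hPI : ∀ x : E, PI x ∈ C ∩ (Lᗮ : Set E) ∧
      ∀ y ∈ C ∩ (Lᗮ : Set E), ‖x - PI x‖ ≤ ‖x - y‖) :
    ((C ∩ (Lᗮ : Set E)).Nonempty ∧ IsClosed (C ∩ (Lᗮ : Set E)) ∧
      Convex ℝ (C ∩ (Lᗮ : Set E)) ∧
      (∀ c ∈ C ∩ (Lᗮ : Set E), ∀ r : ℝ, 0 ≤ r → r • c ∈ C ∩ (Lᗮ : Set E))) ∧
    ∀ θ : E, PC θ = PL θ + PI θ := by
  have hPL_orth (x : E) : x - PL x ∈ Lᗮ :=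
    sub_mem_orthogonal_of_forall_norm_sub_le L (hPL x).1 (hPL x).2
  have : L.HasOrthogonalProjection := ⟨fun x => ⟨PL x, (hPL x).1, hPL_orth x⟩⟩
  have hCL : ∀ c ∈ C, ∀ l ∈ L, c + l ∈ C := fun c hc l hl =>
    add_mem_of_convex_of_smul_mem_s1 hCconv hCcone hc (hLC hl)
  refine ⟨⟨⟨0, hLC L.zero_mem, Lᗮ.zero_mem⟩, hCclosed.inter L.isClosed_orthogonal,
    hCconv.inter Lᗮ.convex, fun c hc r hr => ⟨hCcone c hc.1 r hr, Lᗮ.smul_mem r hc.2⟩⟩, ?_⟩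
  intro θ
  obtain ⟨⟨hPIC, hPIO⟩, hPImin⟩ := hPI θ
  have hsum : PL θ + PI θ ∈ C := by
    rw [add_comm]
    exact hCL _ hPIC _ (hPL θ).1
  exact eq_of_real_inner_sub_le_zero (hPC θ).1 hsum
    (real_inner_sub_le_zero_of_forall_norm_sub_le hCconv (hPC θ).1 (hPC θ).2)
    (real_inner_sub_add_le_zero L hCL (hPL θ).1 (hPL_orth θ) hPIO
      (real_inner_sub_le_zero_of_forall_norm_sub_le (hCconv.inter Lᗮ.convex) ⟨hPIC, hPIO⟩
        hPImin))

/-- Let E be a real Hilbert space, L a closed linear subspace, C a nonempty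
closed convex cone with L ⊆ C. Then for every θ ∈ E, P_C(θ) = P_L(θ) + P_{C ∩ L⊥}(θ),
where C ∩ L⊥ is itself a nonempty closed convex cone. Metric projections are encoded as
functions with the nearest-point property. -/
theorem stmt1 {E : Type*} [NormedAddCommGroup E] [InnerProductSpace ℝ E] [CompleteSpace E]
    (L : Submodule ℝ E) (hLclosed : IsClosed (L : Set E))
    (C : Set E) (hCne : C.Nonempty) (hCclosed : IsClosed C) (hCconv : Convex ℝ C)
    (hCcone : ∀ c ∈ C, ∀ r : ℝ, 0 ≤ r → r • c ∈ C)
    (hLC : (L : Set E) ⊆ C)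
    (PL PC PI : E → E)
    (hPL : ∀ x : E, PL x ∈ L ∧ ∀ y ∈ (L : Set E), ‖x - PL x‖ ≤ ‖x - y‖)
    (hPC : ∀ x : E, PC x ∈ C ∧ ∀ y ∈ C, ‖x - PC x‖ ≤ ‖x - y‖)
    (hPI : ∀ x : E, PI x ∈ C ∩ (Lᗮ : Set E) ∧
      ∀ y ∈ C ∩ (Lᗮ : Set E), ‖x - PI x‖ ≤ ‖x - y‖) :
    ((C ∩ (Lᗮ : Set E)).Nonempty ∧ IsClosed (C ∩ (Lᗮ : Set E)) ∧
      Convex ℝ (C ∩ (Lᗮ : Set E)) ∧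
      (∀ c ∈ C ∩ (Lᗮ : Set E), ∀ r : ℝ, 0 ≤ r → r • c ∈ C ∩ (Lᗮ : Set E))) ∧
    ∀ θ : E, PC θ = PL θ + PI θ :=
  stmt1_general L C hCclosed hCconv hCcone hLC PL PC PI hPL hPC hPI
end

section
/- Let E be a real Hilbert space, L a closed linear subspace of E, and C a nonempty closed convex cone in E with L ⊆ C. Then for every θ ∈ E, ‖θ − P_L(θ)‖² − ‖θ − P_C(θ)‖² = ‖P_{C ∩ L⊥}(θ)‖². -/
/-!
Write `a = P_L θ` and `b = θ - a ∈ Lᗮ`, and let `K = C ∩ Lᗮ`. Since `C` is a convex cone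
containing `L`, it is invariant under translation by `L`, so every `c ∈ C` splits orthogonally as
`P_L c + (c - P_L c)` with `c - P_L c ∈ K`. Pythagoras then shows that `P_K θ = P_K b` and that
`a + P_K b` is a nearest point of `C` to `θ`, so `‖θ - P_C θ‖ = ‖b - P_K b‖`. Finally, for the
projection `p` onto a convex cone, `b - p ⟂ p` (compare `p` with `0` and `2 • p`), whence
`‖b‖² = ‖b - p‖² + ‖p‖²`.
-/

open RealInnerProductSpace

theorem Convex.add_mem_of_smul_mem {E : Type*} [AddCommGroup E] [Module ℝ E] {C : Set E}
    (hC : Convex ℝ C) (hcone : ∀ c ∈ C, ∀ r : ℝ, 0 ≤ r → r • c ∈ C) {c d : E}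
    (hc : c ∈ C) (hd : d ∈ C) : c + d ∈ C := by
  have hmid : (1 / 2 : ℝ) • c + (1 / 2 : ℝ) • d ∈ C :=
    hC hc hd (by norm_num) (by norm_num) (by norm_num)
  simpa [smul_smul, smul_add] using hcone _ hmid 2 zero_le_two

section

variable {E : Type*} [NormedAddCommGroup E]

def IsNearestPoint (K : Set E) (x p : E) : Prop :=
  p ∈ K ∧ ∀ y ∈ K, ‖x - p‖ ≤ ‖x - y‖

theorem IsNearestPoint.norm_sub_eq {K : Set E} {x p p' : E} (h : IsNearestPoint K x p)
    (h' : IsNearestPoint K x p') : ‖x - p‖ = ‖x - p'‖ :=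
  le_antisymm (h.2 p' h'.1) (h'.2 p h.1)

variable [InnerProductSpace ℝ E]

theorem Submodule.norm_add_sq_of_mem_orthogonal {L : Submodule ℝ E} {u v : E} (hu : u ∈ L)
    (hv : v ∈ Lᗮ) : ‖u + v‖ ^ 2 = ‖u‖ ^ 2 + ‖v‖ ^ 2 := by
  rw [norm_add_sq_real, Submodule.inner_right_of_mem_orthogonal hu hv]
  ring

namespace IsNearestPoint

variable {K : Set E} {x p : E}

theorem inner_sub_le_zero (hK : Convex ℝ K) (h : IsNearestPoint K x p) :
    ∀ w ∈ K, ⟪x - p, w - p⟫ ≤ 0 := by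
  have : Nonempty K := ⟨⟨p, h.1⟩⟩
  have hbdd : BddBelow (Set.range fun w : K ↦ ‖x - w‖) :=
    ⟨0, by rintro _ ⟨w, rfl⟩; exact norm_nonneg _⟩
  exact (norm_eq_iInf_iff_real_inner_le_zero hK h.1).1
    (le_antisymm (le_ciInf fun w ↦ h.2 w w.2) (ciInf_le hbdd ⟨p, h.1⟩))

theorem sub_mem_orthogonal {L : Submodule ℝ E} (h : IsNearestPoint (L : Set E) x p) :
    x - p ∈ Lᗮ := by
  rw [Submodule.mem_orthogonal']
  intro u hu
  have h₁ := h.inner_sub_le_zero L.convex (p + u) (L.add_mem h.1 hu)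
  have h₂ := h.inner_sub_le_zero L.convex (p - u) (L.sub_mem h.1 hu)
  rw [add_sub_cancel_left] at h₁
  rw [sub_sub_cancel_left, inner_neg_right] at h₂
  linarith

theorem inner_sub_self_eq_zero (hK : Convex ℝ K) (hcone : ∀ c ∈ K, ∀ r : ℝ, 0 ≤ r → r • c ∈ K)
    (h : IsNearestPoint K x p) : ⟪x - p, p⟫ = 0 := by
  have h₀ := h.inner_sub_le_zero hK 0 (by simpa using hcone p h.1 0 le_rfl)
  have h₂ := h.inner_sub_le_zero hK ((2 : ℝ) • p) (hcone p h.1 2 zero_le_two)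
  rw [zero_sub, inner_neg_right] at h₀
  rw [two_smul, add_sub_cancel_right] at h₂
  linarith

theorem norm_sq_eq_norm_sub_sq_add_norm_sq (hK : Convex ℝ K)
    (hcone : ∀ c ∈ K, ∀ r : ℝ, 0 ≤ r → r • c ∈ K) (h : IsNearestPoint K x p) :
    ‖x‖ ^ 2 = ‖x - p‖ ^ 2 + ‖p‖ ^ 2 := by
  have := norm_add_sq_real (x - p) p
  rw [h.inner_sub_self_eq_zero hK hcone, sub_add_cancel] at this
  linarith

theorem sub_of_subset_orthogonal {L : Submodule ℝ E} (hK : K ⊆ Lᗮ) {a : E} (ha : a ∈ L)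
    (hxa : x - a ∈ Lᗮ) (h : IsNearestPoint K x p) : IsNearestPoint K (x - a) p := by
  have key : ∀ z ∈ K, ‖x - z‖ ^ 2 = ‖a‖ ^ 2 + ‖x - a - z‖ ^ 2 := fun z hz ↦ by
    rw [← Submodule.norm_add_sq_of_mem_orthogonal ha (Lᗮ.sub_mem hxa (hK hz)),
      sub_right_comm, add_sub_cancel]
  refine ⟨h.1, fun y hy ↦ ?_⟩
  have hsq := pow_le_pow_left₀ (norm_nonneg _) (h.2 y hy) 2
  rw [key p h.1, key y hy] at hsq
  exact (pow_le_pow_iff_left₀ (norm_nonneg _) (norm_nonneg _) two_ne_zero).1 (by linarith)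

end IsNearestPoint

theorem isNearestPoint_add_of_subset_cone {L : Submodule ℝ E} {C : Set E} (hC : Convex ℝ C)
    (hcone : ∀ c ∈ C, ∀ r : ℝ, 0 ≤ r → r • c ∈ C) (hLC : (L : Set E) ⊆ C)
    (hL : ∀ y, ∃ l, IsNearestPoint (L : Set E) y l) {x a p : E}
    (ha : IsNearestPoint (L : Set E) x a)
    (hp : IsNearestPoint (C ∩ Lᗮ) (x - a) p) : IsNearestPoint C x (a + p) := by
  refine ⟨hC.add_mem_of_smul_mem hcone (hLC ha.1) hp.1.1, fun y hy ↦ ?_⟩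
  obtain ⟨l, hl⟩ := hL y
  have hw : y - l ∈ C ∩ Lᗮ := by
    refine ⟨?_, hl.sub_mem_orthogonal⟩
    rw [sub_eq_add_neg]
    exact hC.add_mem_of_smul_mem hcone hy (hLC (L.neg_mem hl.1))
  have hsplit : ‖x - y‖ ^ 2 = ‖a - l‖ ^ 2 + ‖x - a - (y - l)‖ ^ 2 := by
    rw [← Submodule.norm_add_sq_of_mem_orthogonal (L.sub_mem ha.1 hl.1)
      (Lᗮ.sub_mem ha.sub_mem_orthogonal hw.2)]
    congr 2
    abel
  have hmin := pow_le_pow_left₀ (norm_nonneg _) (hp.2 _ hw) 2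
  rw [← sub_sub]
  exact (pow_le_pow_iff_left₀ (norm_nonneg _) (norm_nonneg _) two_ne_zero).1
    (by nlinarith [sq_nonneg ‖a - l‖])

end

theorem stmt2_general {E : Type*} [NormedAddCommGroup E] [InnerProductSpace ℝ E]
    (L : Submodule ℝ E)
    (C : Set E) (hCconv : Convex ℝ C)
    (hCcone : ∀ c ∈ C, ∀ r : ℝ, 0 ≤ r → r • c ∈ C)
    (hLC : (L : Set E) ⊆ C)
    (PL PC PI : E → E)
    (hPL : ∀ x : E, PL x ∈ L ∧ ∀ y ∈ (L : Set E), ‖x - PL x‖ ≤ ‖x - y‖)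
    (hPC : ∀ x : E, PC x ∈ C ∧ ∀ y ∈ C, ‖x - PC x‖ ≤ ‖x - y‖)
    (hPI : ∀ x : E, PI x ∈ C ∩ (Lᗮ : Set E) ∧
      ∀ y ∈ C ∩ (Lᗮ : Set E), ‖x - PI x‖ ≤ ‖x - y‖) :
    ∀ θ : E, ‖θ - PL θ‖ ^ 2 - ‖θ - PC θ‖ ^ 2 = ‖PI θ‖ ^ 2 := by
  intro θ
  have hL : ∀ y, IsNearestPoint (L : Set E) y (PL y) := hPL
  have hC : IsNearestPoint C θ (PC θ) := hPC θ
  have hKconv : Convex ℝ (C ∩ Lᗮ) := hCconv.inter Lᗮ.convex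
  have hKcone : ∀ c ∈ C ∩ Lᗮ, ∀ r : ℝ, 0 ≤ r → r • c ∈ C ∩ Lᗮ :=
    fun c hc r hr ↦ ⟨hCcone c hc.1 r hr, Lᗮ.smul_mem r hc.2⟩
  have hp : IsNearestPoint (C ∩ Lᗮ) (θ - PL θ) (PI θ) :=
    IsNearestPoint.sub_of_subset_orthogonal Set.inter_subset_right (hL θ).1
      (hL θ).sub_mem_orthogonal (hPI θ)
  have hq : IsNearestPoint C θ (PL θ + PI θ) :=
    isNearestPoint_add_of_subset_cone hCconv hCcone hLC (fun y ↦ ⟨PL y, hL y⟩) (hL θ) hp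
  rw [hC.norm_sub_eq hq, ← sub_sub, hp.norm_sq_eq_norm_sub_sq_add_norm_sq hKconv hKcone]
  ring

/-- Let E be a real Hilbert space, L a closed linear subspace, C a nonempty
closed convex cone with L ⊆ C. Then for every θ ∈ E,
‖θ − P_L(θ)‖² − ‖θ − P_C(θ)‖² = ‖P_{C ∩ L⊥}(θ)‖². Metric projections are encoded as
functions with the nearest-point property. -/
theorem stmt2 {E : Type*} [NormedAddCommGroup E] [InnerProductSpace ℝ E] [CompleteSpace E]
    (L : Submodule ℝ E) (hLclosed : IsClosed (L : Set E))
    (C : Set E) (hCne : C.Nonempty) (hCclosed : IsClosed C) (hCconv : Convex ℝ C)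
    (hCcone : ∀ c ∈ C, ∀ r : ℝ, 0 ≤ r → r • c ∈ C)
    (hLC : (L : Set E) ⊆ C)
    (PL PC PI : E → E)
    (hPL : ∀ x : E, PL x ∈ L ∧ ∀ y ∈ (L : Set E), ‖x - PL x‖ ≤ ‖x - y‖)
    (hPC : ∀ x : E, PC x ∈ C ∧ ∀ y ∈ C, ‖x - PC x‖ ≤ ‖x - y‖)
    (hPI : ∀ x : E, PI x ∈ C ∩ (Lᗮ : Set E) ∧
      ∀ y ∈ C ∩ (Lᗮ : Set E), ‖x - PI x‖ ≤ ‖x - y‖) :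
    ∀ θ : E, ‖θ - PL θ‖ ^ 2 - ‖θ - PC θ‖ ^ 2 = ‖PI θ‖ ^ 2 :=
  stmt2_general L C hCconv hCcone hLC PL PC PI hPL hPC hPI
end

section
/- Let K ≥ 2, let w₁, …, w_K be positive weights, and let θ ∈ ℝ^K. Suppose there exists an index i with 1 ≤ i ≤ K − 1 such that max_{1 ≤ s ≤ i} Av(θ, s, i) < min_{i+1 ≤ t ≤ K} Av(θ, i+1, t). Then Σ_{j=1}^{K} w_j (θ*_j − Av(θ, 1, K))² > 0, where θ*_j = min_{j ≤ t ≤ K} max_{1 ≤ s ≤ j} Av(θ, s, t). -/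
/-- The weighted average Av(θ, u, v) = (Σ_{j=u}^{v} w_j θ_j)/(Σ_{j=u}^{v} w_j). -/
noncomputable def Av {K : ℕ} (w θ : Fin K → ℝ) (u v : Fin K) : ℝ :=
  (∑ j ∈ Finset.Icc u v, w j * θ j) / ∑ j ∈ Finset.Icc u v, w j

/-- The min–max (isotonic regression) values θ*_j = min_{j ≤ t ≤ K} max_{1 ≤ s ≤ j} Av(θ, s, t). -/
noncomputable def thetaStar {K : ℕ} (w θ : Fin K → ℝ) (j : Fin K) : ℝ :=
  Finset.inf' (Finset.Ici j) ⟨j, by simp⟩ fun t =>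
    Finset.sup' (Finset.Iic j) ⟨j, by simp⟩ fun s => Av w θ s t

/-- Let K ≥ 2, w positive weights, θ ∈ ℝ^K. If for some split index i
(0-based: i with i+1 < K) we have max_{s ≤ i} Av(θ, s, i) < min_{i+1 ≤ t} Av(θ, i+1, t),
then Σ_j w_j (θ*_j − Av(θ, 1, K))² > 0, where Av(θ,1,K) is the overall weighted mean. -/
theorem stmt6 (K : ℕ) (hK : 2 ≤ K) (w θ : Fin K → ℝ) (hw : ∀ j, 0 < w j)
    (i : Fin K) (hi : i.val + 1 < K)
    (hsplit : Finset.sup' (Finset.Iic i) ⟨i, by simp⟩ (fun s => Av w θ s i) <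
      Finset.inf' (Finset.Ici (⟨i.val + 1, hi⟩ : Fin K)) ⟨⟨i.val + 1, hi⟩, by simp⟩
        (fun t => Av w θ ⟨i.val + 1, hi⟩ t)) :
    0 < ∑ j, w j * (thetaStar w θ j - (∑ j, w j * θ j) / ∑ j, w j) ^ 2 := by
  set i1 : Fin K := ⟨i.val + 1, hi⟩ with hi1
  have h1 : thetaStar w θ i ≤
      Finset.sup' (Finset.Iic i) ⟨i, by simp⟩ (fun s => Av w θ s i) :=
    Finset.inf'_le _ (by simp)
  have h2 : Finset.inf' (Finset.Ici i1) ⟨i1, by simp⟩ (fun t => Av w θ i1 t) ≤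
      thetaStar w θ i1 := by
    rw [thetaStar]
    apply Finset.le_inf'
    intro t ht
    refine le_trans (Finset.inf'_le (fun t => Av w θ i1 t) ht) ?_
    exact Finset.le_sup' (fun s => Av w θ s t) (Finset.mem_Iic.mpr le_rfl)
  have hlt : thetaStar w θ i < thetaStar w θ i1 :=
    lt_of_le_of_lt h1 (lt_of_lt_of_le hsplit h2)
  set μ := (∑ j, w j * θ j) / ∑ j, w j
  have key : ∃ j : Fin K, thetaStar w θ j ≠ μ := by
    by_cases h : thetaStar w θ i = μ
    · exact ⟨i1, by intro h'; rw [h', ← h] at hlt; exact lt_irrefl _ hlt⟩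
    · exact ⟨i, h⟩
  obtain ⟨j0, hj0⟩ := key
  apply Finset.sum_pos'
  · intro j _
    exact mul_nonneg (hw j).le (sq_nonneg _)
  · refine ⟨j0, Finset.mem_univ _, ?_⟩
    have h : thetaStar w θ j0 - μ ≠ 0 := sub_ne_zero.mpr hj0
    exact mul_pos (hw j0) (by positivity)
end

section
/- Let K ≥ 2, let w₁, …, w_K be positive weights, and let θ ∈ ℝ^K. If an index i with 1 ≤ i ≤ K − 1 satisfies max_{1 ≤ s ≤ i} Av(θ, s, i) < min_{i+1 ≤ t ≤ K} Av(θ, i+1, t), then θ*_i < θ*_{i+1}, where θ*_j = min_{j ≤ t ≤ K} max_{1 ≤ s ≤ j} Av(θ, s, t). -/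
set_option maxHeartbeats 1000000 in
/-- Let K ≥ 2, w positive weights, θ ∈ ℝ^K. If a split index i
(0-based: i+1 < K) satisfies max_{s ≤ i} Av(θ, s, i) < min_{i+1 ≤ t} Av(θ, i+1, t),
then θ*_i < θ*_{i+1}. -/
theorem stmt7 (K : ℕ) (hK : 2 ≤ K) (w θ : Fin K → ℝ) (hw : ∀ j, 0 < w j)
    (i : Fin K) (hi : i.val + 1 < K)
    (hsplit : Finset.sup' (Finset.Iic i) ⟨i, by simp⟩ (fun s => Av w θ s i) <
      Finset.inf' (Finset.Ici (⟨i.val + 1, hi⟩ : Fin K)) ⟨⟨i.val + 1, hi⟩, by simp⟩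
        (fun t => Av w θ ⟨i.val + 1, hi⟩ t)) :
    thetaStar w θ i < thetaStar w θ ⟨i.val + 1, hi⟩ := by
  set i' : Fin K := ⟨i.val + 1, hi⟩
  have h1 : thetaStar w θ i ≤
      Finset.sup' (Finset.Iic i) ⟨i, Finset.mem_Iic.mpr le_rfl⟩ (fun s => Av w θ s i) :=
    Finset.inf'_le _ (Finset.mem_Ici.mpr le_rfl)
  have h2 : Finset.inf' (Finset.Ici i') ⟨i', Finset.mem_Ici.mpr le_rfl⟩ (fun t => Av w θ i' t) ≤
      thetaStar w θ i' := by
    apply Finset.le_inf'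
    intro t ht
    exact le_trans (Finset.inf'_le _ ht) (Finset.le_sup' (fun s => Av w θ s t) (Finset.mem_Iic.mpr (le_refl i')))
  exact lt_of_le_of_lt h1 (lt_of_lt_of_le hsplit h2)
end

section
/- Let K ≥ 1, let w₁, …, w_K be positive weights, and let θ ∈ ℝ^K. Then the min–max values are nondecreasing: θ*_i ≤ θ*_{i+1} for every 1 ≤ i ≤ K − 1, where θ*_j = min_{j ≤ t ≤ K} max_{1 ≤ s ≤ j} Av(θ, s, t). -/
/-- Let K ≥ 1, w positive weights, θ ∈ ℝ^K. Then the min–max values are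
nondecreasing: θ*_i ≤ θ*_{i+1} for every i (0-based: i with i+1 < K). -/
theorem stmt8 (K : ℕ) (hK : 1 ≤ K) (w θ : Fin K → ℝ) (hw : ∀ j, 0 < w j) :
    ∀ (i : Fin K) (h : i.val + 1 < K), thetaStar w θ i ≤ thetaStar w θ ⟨i.val + 1, h⟩ := by
  intro i h
  unfold thetaStar
  apply Finset.le_inf'
  intro t ht
  have hit : i ≤ t := by
    have : (⟨i.val + 1, h⟩ : Fin K) ≤ t := Finset.mem_Ici.mp ht
    exact le_trans (by simp [Fin.le_def]) this
  calc Finset.inf' (Finset.Ici i) ⟨i, by simp⟩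
        (fun t => Finset.sup' (Finset.Iic i) ⟨i, by simp⟩ fun s => Av w θ s t)
      ≤ Finset.sup' (Finset.Iic i) ⟨i, by simp⟩ (fun s => Av w θ s t) :=
        Finset.inf'_le _ (Finset.mem_Ici.mpr hit)
    _ ≤ Finset.sup' (Finset.Iic ⟨i.val + 1, h⟩) ⟨⟨i.val + 1, h⟩, by simp⟩
        (fun s => Av w θ s t) := by
        apply Finset.sup'_le
        intro s hs
        have hsi : s ≤ i := Finset.mem_Iic.mp hs
        exact Finset.le_sup' (fun s => Av w θ s t)
          (Finset.mem_Iic.mpr (le_trans hsi (by simp [Fin.le_def])))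
end

section
/- Let K ≥ 1, let w₁, …, w_K be positive weights, and let θ ∈ ℝ^K. Then the min–max values preserve the weighted mean: Σ_{j=1}^{K} w_j θ*_j = Σ_{j=1}^{K} w_j θ_j, where θ*_j = min_{j ≤ t ≤ K} max_{1 ≤ s ≤ j} Av(θ, s, t). -/
/-!
Let `t₀` minimise `Av(θ, 1, t)` over `t`, with minimum `μ`. Then `θ*_j = μ` for `j ≤ t₀`, and for
`j > t₀` the starts `s ≤ t₀` never exceed the start `t₀ + 1` in the inner maximum, so `θ*_j` is the
min–max value of the subproblem on the indices `> t₀`. The first block contributes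
`Σ_{j ≤ t₀} w_j μ = Σ_{j ≤ t₀} w_j θ_j`, and induction on the remaining suffix does the rest.
Every comparison of averages reduces, via `Av(u, v) ≤ c ↔ Σ_{u ≤ j ≤ v} w_j (θ_j - c) ≤ 0`, to the
additivity of these sums over adjacent intervals.
-/

open Finset

/-- The min–max values of the subproblem on the indices `≥ a` (junk value `0` for `j < a`). -/
noncomputable def suffixMinMax {K : ℕ} (w θ : Fin K → ℝ) (a j : Fin K) : ℝ :=
  if h : a ≤ j then
    (Ici j).inf' nonempty_Ici fun t => (Icc a j).sup' (nonempty_Icc.2 h) fun s => Av w θ s t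
  else 0

section

variable {K : ℕ} {w θ : Fin K → ℝ} {a j m n s t t₀ u v : Fin K} {c : ℝ}

lemma sum_Icc_eq_add_sum_Icc (f : Fin K → ℝ) (hum : u ≤ m) (hmv : m ≤ v)
    (hn : n.val = m.val + 1) :
    ∑ j ∈ Icc u v, f j = ∑ j ∈ Icc u m, f j + ∑ j ∈ Icc n v, f j := by
  rw [Fin.le_def] at hum hmv
  rw [← sum_union (disjoint_left.2 fun j => by simp only [mem_Icc, Fin.le_def]; omega)]
  congr 1
  ext j
  simp only [mem_union, mem_Icc, Fin.le_def]
  omega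

lemma sum_Icc_weight_pos (hw : ∀ j, 0 < w j) (huv : u ≤ v) : 0 < ∑ j ∈ Icc u v, w j :=
  sum_pos (fun j _ => hw j) (nonempty_Icc.2 huv)

lemma Av_le_iff (hw : ∀ j, 0 < w j) (huv : u ≤ v) :
    Av w θ u v ≤ c ↔ ∑ j ∈ Icc u v, w j * (θ j - c) ≤ 0 := by
  rw [Av, div_le_iff₀ (sum_Icc_weight_pos hw huv)]
  simp only [mul_sub, sum_sub_distrib, ← sum_mul, sub_nonpos, mul_comm c]

lemma le_Av_iff (hw : ∀ j, 0 < w j) (huv : u ≤ v) :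
    c ≤ Av w θ u v ↔ 0 ≤ ∑ j ∈ Icc u v, w j * (θ j - c) := by
  rw [Av, le_div_iff₀ (sum_Icc_weight_pos hw huv)]
  simp only [mul_sub, sum_sub_distrib, ← sum_mul, sub_nonneg, mul_comm c]

lemma sum_mul_Av (hw : ∀ j, 0 < w j) (huv : u ≤ v) :
    ∑ j ∈ Icc u v, w j * Av w θ u v = ∑ j ∈ Icc u v, w j * θ j := by
  rw [← sum_mul, Av, mul_div_cancel₀ _ (sum_Icc_weight_pos hw huv).ne']

lemma Av_le_of_split (hw : ∀ j, 0 < w j) (hsm : s ≤ m) (hmt : m < t) (hn : n.val = m.val + 1)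
    (hleft : Av w θ s m ≤ c) (hright : Av w θ n t ≤ c) : Av w θ s t ≤ c := by
  have hnt : n ≤ t := by rw [Fin.lt_def] at hmt; rw [Fin.le_def]; omega
  rw [Av_le_iff hw hsm] at hleft
  rw [Av_le_iff hw hnt] at hright
  rw [Av_le_iff hw (hsm.trans hmt.le), sum_Icc_eq_add_sum_Icc _ hsm hmt.le hn]
  linarith

section Minimizer

variable (hmin : ∀ t ∈ Ici a, Av w θ a t₀ ≤ Av w θ a t)
include hmin

lemma Av_le_of_minimizer (hw : ∀ j, 0 < w j) (has : a ≤ s) (hst : s ≤ t₀) :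
    Av w θ s t₀ ≤ Av w θ a t₀ := by
  rcases has.eq_or_lt with rfl | has
  · exact le_rfl
  obtain ⟨m, hm⟩ : ∃ m : Fin K, s.val = m.val + 1 :=
    ⟨⟨s.val - 1, by omega⟩, by rw [Fin.lt_def] at has; simp only; omega⟩
  have ham : a ≤ m := by rw [Fin.lt_def] at has; rw [Fin.le_def]; omega
  have hprefix := (le_Av_iff hw ham).1 (hmin m (mem_Ici.2 ham))
  have hblock := (Av_le_iff hw (has.le.trans hst)).1 (le_refl (Av w θ a t₀))
  rw [sum_Icc_eq_add_sum_Icc _ ham (by rw [Fin.le_def] at hst ⊢; omega) hm] at hblock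
  rw [Av_le_iff hw hst]
  linarith

lemma le_Av_of_minimizer (hw : ∀ j, 0 < w j) (hat₀ : a ≤ t₀) (ht : t₀ < t)
    (hn : n.val = t₀.val + 1) : Av w θ a t₀ ≤ Av w θ n t := by
  have hnt : n ≤ t := by rw [Fin.lt_def] at ht; rw [Fin.le_def]; omega
  have hwhole := (le_Av_iff hw (hat₀.trans ht.le)).1 (hmin t (mem_Ici.2 (hat₀.trans ht.le)))
  have hblock := (Av_le_iff hw hat₀).1 (le_refl (Av w θ a t₀))
  rw [sum_Icc_eq_add_sum_Icc _ hat₀ ht.le hn] at hwhole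
  rw [le_Av_iff hw hnt]
  linarith

lemma suffixMinMax_of_le_minimizer (hw : ∀ j, 0 < w j) (haj : a ≤ j) (hjt : j ≤ t₀) :
    suffixMinMax w θ a j = Av w θ a t₀ := by
  rw [suffixMinMax, dif_pos haj]
  apply le_antisymm
  · refine (inf'_le _ (mem_Ici.2 hjt)).trans (sup'_le _ _ fun s hs => ?_)
    rw [mem_Icc] at hs
    exact Av_le_of_minimizer hmin hw hs.1 (hs.2.trans hjt)
  · refine le_inf' _ _ fun t ht => (hmin t (mem_Ici.2 (haj.trans (mem_Ici.1 ht)))).trans ?_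
    exact le_sup' (fun s => Av w θ s t) (mem_Icc.2 ⟨le_rfl, haj⟩)

lemma suffixMinMax_of_minimizer_lt (hw : ∀ j, 0 < w j) (hat₀ : a ≤ t₀) (hj : t₀ < j)
    (hn : n.val = t₀.val + 1) : suffixMinMax w θ a j = suffixMinMax w θ n j := by
  have hnj : n ≤ j := by rw [Fin.lt_def] at hj; rw [Fin.le_def]; omega
  rw [suffixMinMax, dif_pos (hat₀.trans hj.le), suffixMinMax, dif_pos hnj]
  refine inf'_congr _ rfl fun t ht => le_antisymm (sup'_le _ _ fun s hs => ?_)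
    (sup'_mono _ (Icc_subset_Icc_left (by rw [Fin.le_def]; rw [Fin.le_def] at hat₀; omega)) _)
  rw [mem_Icc] at hs
  rcases le_or_gt s t₀ with hst | hst
  · have hjt : t₀ < t := hj.trans_le (mem_Ici.1 ht)
    refine (Av_le_of_split hw hst hjt hn ?_ le_rfl).trans
      (le_sup' (fun s => Av w θ s t) (mem_Icc.2 ⟨le_rfl, hnj⟩))
    exact (Av_le_of_minimizer hmin hw hs.1 hst).trans (le_Av_of_minimizer hmin hw hat₀ hjt hn)
  · refine le_sup' (fun s => Av w θ s t) (mem_Icc.2 ⟨?_, hs.2⟩)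
    rw [Fin.lt_def] at hst; rw [Fin.le_def]; omega

lemma sum_Icc_mul_suffixMinMax (hw : ∀ j, 0 < w j) (hat₀ : a ≤ t₀) :
    ∑ j ∈ Icc a t₀, w j * suffixMinMax w θ a j = ∑ j ∈ Icc a t₀, w j * θ j := by
  rw [← sum_mul_Av (θ := θ) hw hat₀]
  refine sum_congr rfl fun j hj => ?_
  rw [suffixMinMax_of_le_minimizer hmin hw (mem_Icc.1 hj).1 (mem_Icc.1 hj).2]

end Minimizer

theorem sum_Ici_mul_suffixMinMax (hw : ∀ j, 0 < w j) (a : Fin K) :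
    ∑ j ∈ Ici a, w j * suffixMinMax w θ a j = ∑ j ∈ Ici a, w j * θ j := by
  induction a using WellFoundedGT.induction with
  | _ a ih =>
  obtain ⟨t₀, ht₀, hmin⟩ := exists_min_image (Ici a) (Av w θ a) nonempty_Ici
  have hat₀ := mem_Ici.1 ht₀
  by_cases hlast : t₀.val + 1 < K
  · obtain ⟨n, hn⟩ : ∃ n : Fin K, n.val = t₀.val + 1 := ⟨⟨_, hlast⟩, rfl⟩
    have hdisj : Disjoint (Icc a t₀) (Ici n) :=
      disjoint_left.2 fun j => by simp only [mem_Icc, mem_Ici, Fin.le_def]; omega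
    have hsplit : Ici a = Icc a t₀ ∪ Ici n := by
      ext j; simp only [mem_union, mem_Icc, mem_Ici, Fin.le_def] at hat₀ ⊢; omega
    rw [hsplit, sum_union hdisj, sum_union hdisj, sum_Icc_mul_suffixMinMax hmin hw hat₀,
      ← ih n (by rw [Fin.lt_def]; rw [Fin.le_def] at hat₀; omega)]
    congr 1
    refine sum_congr rfl fun j hj => ?_
    have hj : t₀ < j := by rw [mem_Ici, Fin.le_def] at hj; rw [Fin.lt_def]; omega
    rw [suffixMinMax_of_minimizer_lt hmin hw hat₀ hj hn]
  · have hsplit : Ici a = Icc a t₀ := by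
      ext j; simp only [mem_Icc, mem_Ici, Fin.le_def] at hat₀ ⊢; omega
    rw [hsplit, sum_Icc_mul_suffixMinMax hmin hw hat₀]

end

/-- Let K ≥ 1, w positive weights, θ ∈ ℝ^K. Then the min–max values preserve
the weighted mean: Σ_j w_j θ*_j = Σ_j w_j θ_j. -/
theorem stmt9 (K : ℕ) (hK : 1 ≤ K) (w θ : Fin K → ℝ) (hw : ∀ j, 0 < w j) :
    ∑ j, w j * thetaStar w θ j = ∑ j, w j * θ j := by
  set a₀ : Fin K := ⟨0, hK⟩
  have ha₀ : ∀ j, a₀ ≤ j := fun j => Fin.le_def.2 (Nat.zero_le _)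
  have hstar : ∀ j, thetaStar w θ j = suffixMinMax w θ a₀ j := fun j => by
    rw [suffixMinMax, dif_pos (ha₀ j)]
    refine inf'_congr _ rfl fun t _ => sup'_congr _ ?_ fun _ _ => rfl
    ext s; simp [ha₀ s]
  have huniv : (univ : Finset (Fin K)) = Ici a₀ := by ext j; simp [ha₀ j]
  simp only [hstar, huniv]
  exact sum_Ici_mul_suffixMinMax hw a₀
end

section
/- Let K ≥ 1, let w₁, …, w_K be positive weights, and let θ ∈ ℝ^K. Then the vector θ* ∈ ℝ^K with components θ*_j = min_{j ≤ t ≤ K} max_{1 ≤ s ≤ j} Av(θ, s, t) is the unique minimizer of the weighted least squares criterion Σ_{j=1}^{K} w_j (x_j − θ_j)² over the simple order cone {x ∈ ℝ^K : x₁ ≤ x₂ ≤ ⋯ ≤ x_K}; that is, θ* is feasible and Σ_{j=1}^{K} w_j (θ*_j − θ_j)² < Σ_{j=1}^{K} w_j (x_j − θ_j)² for every x in the simple order cone with x ≠ θ*. -/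
set_option maxHeartbeats 1000000

namespace Stmt10

variable {n : ℕ} (w θ : Fin (n+1) → ℝ)

/-- weight sum over a closed interval -/
noncomputable def Ws (u v : Fin (n+1)) : ℝ := ∑ i ∈ Finset.Icc u v, w i

/-- weighted data sum over a closed interval -/
noncomputable def Ts (u v : Fin (n+1)) : ℝ := ∑ i ∈ Finset.Icc u v, w i * θ i

lemma Ws_pos (hw : ∀ j, 0 < w j) {u v : Fin (n+1)} (h : u ≤ v) : 0 < Ws w u v :=
  Finset.sum_pos (fun i _ => hw i) ⟨u, Finset.mem_Icc.2 ⟨le_rfl, h⟩⟩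

lemma Av_mul (hw : ∀ j, 0 < w j) {u v : Fin (n+1)} (h : u ≤ v) : Av w θ u v * Ws w u v = Ts w θ u v :=
  div_mul_cancel₀ _ (Ws_pos w hw h).ne'

lemma Av_le_iff (hw : ∀ j, 0 < w j) {u v : Fin (n+1)} {c : ℝ} (h : u ≤ v) :
    Av w θ u v ≤ c ↔ Ts w θ u v ≤ c * Ws w u v :=
  div_le_iff₀ (Ws_pos w hw h)

lemma le_Av_iff (hw : ∀ j, 0 < w j) {u v : Fin (n+1)} {c : ℝ} (h : u ≤ v) :
    c ≤ Av w θ u v ↔ c * Ws w u v ≤ Ts w θ u v :=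
  le_div_iff₀ (Ws_pos w hw h)

lemma Icc_split {u m m' v : Fin (n+1)} (h1 : u ≤ m) (hm : m'.val = m.val + 1) (h2 : m' ≤ v)
    (g : Fin (n+1) → ℝ) :
    ∑ i ∈ Finset.Icc u v, g i = ∑ i ∈ Finset.Icc u m, g i + ∑ i ∈ Finset.Icc m' v, g i := by
  have h1' : u.val ≤ m.val := h1
  have h2' : m'.val ≤ v.val := h2
  rw [← Finset.sum_union]
  · congr 1
    ext i
    simp only [Finset.mem_union, Finset.mem_Icc, Fin.le_def]
    omega
  · rw [Finset.disjoint_left]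
    intro i hi hi'
    simp only [Finset.mem_Icc, Fin.le_def] at hi hi'
    omega

lemma Ws_split {u m m' v : Fin (n+1)} (h1 : u ≤ m) (hm : m'.val = m.val + 1) (h2 : m' ≤ v) :
    Ws w u v = Ws w u m + Ws w m' v := Icc_split h1 hm h2 _

lemma Ts_split {u m m' v : Fin (n+1)} (h1 : u ≤ m) (hm : m'.val = m.val + 1) (h2 : m' ≤ v) :
    Ts w θ u v = Ts w θ u m + Ts w θ m' v := Icc_split h1 hm h2 _

/-- min–max with left boundary `a`. -/
noncomputable def fA (a j : Fin (n+1)) : ℝ :=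
  (Finset.Ici j).inf' ⟨j, Finset.mem_Ici.2 le_rfl⟩ fun t =>
    (insert j (Finset.Icc a j)).sup' (Finset.insert_nonempty _ _) fun s => Av w θ s t

lemma fA_le' {a j : Fin (n+1)} {c : ℝ} (h : a ≤ j) {t : Fin (n+1)} (ht : j ≤ t)
    (hall : ∀ s, a ≤ s → s ≤ j → Av w θ s t ≤ c) : fA w θ a j ≤ c := by
  refine le_trans (Finset.inf'_le _ (Finset.mem_Ici.2 ht)) ?_
  refine Finset.sup'_le _ _ (fun s hs => ?_)
  rcases Finset.mem_insert.1 hs with rfl | hs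
  · exact hall _ h le_rfl
  · exact hall _ (Finset.mem_Icc.1 hs).1 (Finset.mem_Icc.1 hs).2

lemma le_fA {a j : Fin (n+1)} {c : ℝ}
    (hc : ∀ t, j ≤ t → ∃ s, a ≤ s ∧ s ≤ j ∧ c ≤ Av w θ s t) : c ≤ fA w θ a j := by
  refine Finset.le_inf' _ _ (fun t ht => ?_)
  obtain ⟨s, h1, h2, h3⟩ := hc t (Finset.mem_Ici.1 ht)
  exact h3.trans (Finset.le_sup' (f := fun s => Av w θ s t) (Finset.mem_insert.2 (Or.inr (Finset.mem_Icc.2 ⟨h1, h2⟩))))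

lemma fA_self_le {a t : Fin (n+1)} (ht : a ≤ t) : fA w θ a a ≤ Av w θ a t := by
  refine le_trans (Finset.inf'_le _ (Finset.mem_Ici.2 ht)) ?_
  refine Finset.sup'_le _ _ (fun s hs => ?_)
  rcases Finset.mem_insert.1 hs with rfl | hs
  · exact le_rfl
  · rw [Finset.Icc_self, Finset.mem_singleton] at hs
    exact hs ▸ le_rfl

lemma exists_t1 (a : Fin (n+1)) : ∃ t, a ≤ t ∧ fA w θ a a = Av w θ a t := by
  obtain ⟨t, ht, h⟩ := Finset.exists_mem_eq_inf'
    (⟨a, Finset.mem_Ici.2 le_rfl⟩ : (Finset.Ici a).Nonempty)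
    (fun t => (insert a (Finset.Icc a a)).sup' (Finset.insert_nonempty _ _)
      fun s => Av w θ s t)
  refine ⟨t, Finset.mem_Ici.1 ht, h.trans ?_⟩
  apply le_antisymm
  · refine Finset.sup'_le (f := fun s => Av w θ s t) _ (fun s hs => ?_)
    rcases Finset.mem_insert.1 hs with rfl | hs
    · exact le_rfl
    · rw [Finset.Icc_self, Finset.mem_singleton] at hs
      exact hs ▸ le_rfl
  · exact Finset.le_sup' (f := fun s => Av w θ s t) (Finset.mem_insert_self _ _)



theorem pkg (hw : ∀ j, 0 < w j) :
    ∀ N : ℕ, ∀ a : Fin (n+1), n + 1 - a.val ≤ N →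
      (∀ j j' : Fin (n+1), a ≤ j → j ≤ j' → fA w θ a j ≤ fA w θ a j') ∧
      (∀ j : Fin (n+1), a ≤ j → ∑ i ∈ Finset.Icc a j, w i * fA w θ a i ≤ Ts w θ a j) ∧
      (∑ i ∈ Finset.Icc a (Fin.last n), w i * fA w θ a i = Ts w θ a (Fin.last n)) ∧
      (∀ j j' : Fin (n+1), a ≤ j → j'.val = j.val + 1 → fA w θ a j < fA w θ a j' →
        ∑ i ∈ Finset.Icc a j, w i * fA w θ a i = Ts w θ a j) := by
  intro N
  induction N with
  | zero =>
    intro a ha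
    exact absurd ha (by have := a.isLt; omega)
  | succ N ih =>
    intro a ha
    obtain ⟨t₁, ht₁a, ht₁⟩ := exists_t1 w θ a
    set c := fA w θ a a with hc
    clear_value c
    have F0 : ∀ t, a ≤ t → c ≤ Av w θ a t := fun t ht => hc ▸ fA_self_le w θ ht
    have h2 : c * Ws w a t₁ = Ts w θ a t₁ := by
      have := Av_mul w θ hw ht₁a; rw [← ht₁] at this; exact this
    have F2 : ∀ s : Fin (n+1), a ≤ s → s ≤ t₁ → Av w θ s t₁ ≤ c := by
      intro s has hst
      rcases eq_or_lt_of_le has with rfl | hlt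
      · exact le_of_eq ht₁.symm
      · have hlt' : a.val < s.val := hlt
        set s' : Fin (n+1) := ⟨s.val - 1, by omega⟩ with hs'
        have hs'v : s.val = s'.val + 1 := by simp [hs']; omega
        have has' : a ≤ s' := by rw [Fin.le_def]; simp [hs']; omega
        have h1 : c * Ws w a s' ≤ Ts w θ a s' := (le_Av_iff w θ hw has').1 (F0 s' has')
        have hWs := Ws_split w (m := s') (m' := s) has' hs'v hst
        have hTs := Ts_split w θ (m := s') (m' := s) has' hs'v hst
        rw [Av_le_iff w θ hw hst]
        have hexp : c * Ws w a t₁ = c * Ws w a s' + c * Ws w s t₁ := by rw [hWs]; ring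
        linarith
    have F3 : ∀ j, a ≤ j → j ≤ t₁ → fA w θ a j = c := by
      intro j haj hjt
      apply le_antisymm
      · exact fA_le' w θ haj hjt (fun s hs1 hs2 => F2 s hs1 (hs2.trans hjt))
      · exact le_fA w θ (fun t ht => ⟨a, le_rfl, haj, F0 t (haj.trans ht)⟩)
    have Hblock : ∀ j, a ≤ j → j ≤ t₁ →
        ∑ i ∈ Finset.Icc a j, w i * fA w θ a i = c * Ws w a j := by
      intro j haj hjt
      rw [Finset.sum_congr rfl (fun i hi => by
        rw [F3 i (Finset.mem_Icc.1 hi).1 ((Finset.mem_Icc.1 hi).2.trans hjt)]),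
        ← Finset.sum_mul, mul_comm]
      rfl
    have F7 : ∑ i ∈ Finset.Icc a t₁, w i * fA w θ a i = Ts w θ a t₁ := by
      rw [Hblock t₁ ht₁a le_rfl, h2]
    rcases eq_or_lt_of_le (Fin.le_last t₁) with hlast | hlast
    · -- t₁ is the last index: a single block
      have hall : ∀ j : Fin (n+1), j ≤ t₁ := fun j => hlast ▸ Fin.le_last j
      refine ⟨?_, ?_, ?_, ?_⟩
      · intro j j' hj hjj'
        rw [F3 j hj (hall j), F3 j' (hj.trans hjj') (hall j')]
      · intro j hj
        rw [Hblock j hj (hall j)]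
        exact (le_Av_iff w θ hw hj).1 (F0 j hj)
      · rw [← hlast]; exact F7
      · intro j j' hj hj' hcon
        rw [F3 j hj (hall j), F3 j' (by rw [Fin.le_def]; have : a.val ≤ j.val := hj; omega)
          (hall j')] at hcon
        exact absurd hcon (lt_irrefl c)
    · -- t₁ < last : recurse on the remaining interval
      have ht₁lt : t₁.val < n := by
        have := Fin.lt_def.1 hlast; simpa using this
      set t₁' : Fin (n+1) := ⟨t₁.val + 1, by omega⟩ with ht₁'def
      have ht₁'v : t₁'.val = t₁.val + 1 := rfl
      clear_value t₁'
      have F4 : ∀ t, t₁ < t → c ≤ Av w θ t₁' t := by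
        intro t ht
        have hat : a ≤ t := ht₁a.trans ht.le
        have ht₁'t : t₁' ≤ t := by rw [Fin.le_def]; have := Fin.lt_def.1 ht; omega
        have h0 : c * Ws w a t ≤ Ts w θ a t := (le_Av_iff w θ hw hat).1 (F0 t hat)
        have hWs := Ws_split w (m := t₁) (m' := t₁') ht₁a ht₁'v ht₁'t
        have hTs := Ts_split w θ (m := t₁) (m' := t₁') ht₁a ht₁'v ht₁'t
        rw [le_Av_iff w θ hw ht₁'t]
        have hexp : c * Ws w a t = c * Ws w a t₁ + c * Ws w t₁' t := by rw [hWs]; ring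
        linarith
      have Fkey : ∀ s t : Fin (n+1), a ≤ s → s ≤ t₁ → t₁ < t → Av w θ s t ≤ Av w θ t₁' t := by
        intro s t has hst₁ ht
        have ht₁'t : t₁' ≤ t := by rw [Fin.le_def]; have := Fin.lt_def.1 ht; omega
        have hstt : s ≤ t := hst₁.trans (le_of_lt ht)
        have hA1 : Av w θ s t₁ ≤ c := F2 s has hst₁
        have hA2 : c ≤ Av w θ t₁' t := F4 t ht
        have hWs := Ws_split w (m := t₁) (m' := t₁') hst₁ ht₁'v ht₁'t
        have hTs := Ts_split w θ (m := t₁) (m' := t₁') hst₁ ht₁'v ht₁'t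
        have hAm1 : Av w θ s t₁ * Ws w s t₁ = Ts w θ s t₁ := Av_mul w θ hw hst₁
        have hAm2 : Av w θ t₁' t * Ws w t₁' t = Ts w θ t₁' t := Av_mul w θ hw ht₁'t
        have hWp : 0 < Ws w s t₁ := Ws_pos w hw hst₁
        rw [Av_le_iff w θ hw hstt]
        have step1 : Ts w θ s t₁ ≤ Av w θ t₁' t * Ws w s t₁ := by nlinarith
        have hexp : Av w θ t₁' t * Ws w s t = Av w θ t₁' t * Ws w s t₁ + Av w θ t₁' t * Ws w t₁' t := by
          rw [hWs]; ring
        linarith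
      have F5 : ∀ j, t₁ < j → fA w θ a j = fA w θ t₁' j := by
        intro j hj
        have haj : a ≤ j := ht₁a.trans hj.le
        have ht₁'j : t₁' ≤ j := by rw [Fin.le_def]; have := Fin.lt_def.1 hj; omega
        unfold fA
        refine Finset.inf'_congr _ rfl (fun t ht => ?_)
        have hjt : j ≤ t := Finset.mem_Ici.1 ht
        apply le_antisymm
        · refine Finset.sup'_le _ _ (fun s hs => ?_)
          rcases Finset.mem_insert.1 hs with rfl | hs
          · exact Finset.le_sup' (f := fun s => Av w θ s t) (Finset.mem_insert_self _ _)
          · obtain ⟨h1, h2'⟩ := Finset.mem_Icc.1 hs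
            by_cases hst : s ≤ t₁
            · calc Av w θ s t ≤ Av w θ t₁' t :=
                    Fkey s t h1 hst (lt_of_lt_of_le hj hjt)
                _ ≤ _ := Finset.le_sup' (f := fun s => Av w θ s t)
                    (Finset.mem_insert.2 (Or.inr (Finset.mem_Icc.2 ⟨le_rfl, ht₁'j⟩)))
            · push_neg at hst
              have : t₁' ≤ s := by rw [Fin.le_def]; have := Fin.lt_def.1 hst; omega
              exact Finset.le_sup' (f := fun s => Av w θ s t)
                (Finset.mem_insert.2 (Or.inr (Finset.mem_Icc.2 ⟨this, h2'⟩)))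
        · refine Finset.sup'_le _ _ (fun s hs => ?_)
          rcases Finset.mem_insert.1 hs with rfl | hs
          · exact Finset.le_sup' (f := fun s => Av w θ s t) (Finset.mem_insert_self _ _)
          · obtain ⟨h1, h2'⟩ := Finset.mem_Icc.1 hs
            have : a ≤ s := ht₁a.trans (le_trans (by rw [Fin.le_def]; omega) h1)
            exact Finset.le_sup' (f := fun s => Av w θ s t)
              (Finset.mem_insert.2 (Or.inr (Finset.mem_Icc.2 ⟨this, h2'⟩)))
      have F6 : ∀ j, t₁ < j → c ≤ fA w θ t₁' j := by
        intro j hj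
        have ht₁'j : t₁' ≤ j := by rw [Fin.le_def]; have := Fin.lt_def.1 hj; omega
        exact le_fA w θ (fun t ht => ⟨t₁', le_rfl, ht₁'j,
          F4 t (lt_of_lt_of_le hj ht)⟩)
      have hN : n + 1 - t₁'.val ≤ N := by
        have h1 : a.val ≤ t₁.val := ht₁a
        have := a.isLt
        omega
      obtain ⟨ih1, ih2, ih3, ih4⟩ := ih t₁' hN
      have Hsplit : ∀ j, t₁ < j →
          ∑ i ∈ Finset.Icc a j, w i * fA w θ a i
            = Ts w θ a t₁ + ∑ i ∈ Finset.Icc t₁' j, w i * fA w θ t₁' i := by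
        intro j hj
        have ht₁'j : t₁' ≤ j := by rw [Fin.le_def]; have := Fin.lt_def.1 hj; omega
        have hs := Icc_split (g := fun i => w i * fA w θ a i) ht₁a ht₁'v ht₁'j
        rw [hs, F7]
        have hcong : ∑ i ∈ Finset.Icc t₁' j, w i * fA w θ a i
            = ∑ i ∈ Finset.Icc t₁' j, w i * fA w θ t₁' i :=
          Finset.sum_congr rfl (fun i hi => by
            obtain ⟨h1, _⟩ := Finset.mem_Icc.1 hi
            rw [F5 i (by rw [Fin.lt_def]; have := Fin.le_def.1 h1; omega)])
        rw [hcong]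
      refine ⟨?_, ?_, ?_, ?_⟩
      · intro j j' hj hjj'
        by_cases h' : j' ≤ t₁
        · rw [F3 j hj (hjj'.trans h'), F3 j' (hj.trans hjj') h']
        · push_neg at h'
          by_cases hjt : j ≤ t₁
          · rw [F3 j hj hjt, F5 j' h']
            exact F6 j' h'
          · push_neg at hjt
            rw [F5 j hjt, F5 j' h']
            exact ih1 j j' (by rw [Fin.le_def]; have := Fin.lt_def.1 hjt; omega) hjj'
      · intro j hj
        by_cases hjt : j ≤ t₁
        · rw [Hblock j hj hjt]
          exact (le_Av_iff w θ hw hj).1 (F0 j hj)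
        · push_neg at hjt
          have ht₁'j : t₁' ≤ j := by rw [Fin.le_def]; have := Fin.lt_def.1 hjt; omega
          rw [Hsplit j hjt, Ts_split w θ (m := t₁) (m' := t₁') ht₁a ht₁'v ht₁'j]
          have := ih2 j ht₁'j
          linarith
      · have hjt : t₁ < Fin.last n := hlast
        have ht₁'l : t₁' ≤ Fin.last n := by rw [Fin.le_def]; simp [Fin.last]; omega
        rw [Hsplit _ hjt, Ts_split w θ (m := t₁) (m' := t₁') ht₁a ht₁'v ht₁'l, ih3]
      · intro j j' hj hj' hcon
        rcases lt_trichotomy j.val t₁.val with h | h | h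
        · exfalso
          have h1 : j ≤ t₁ := by rw [Fin.le_def]; omega
          have h1' : j' ≤ t₁ := by rw [Fin.le_def]; omega
          rw [F3 j hj h1, F3 j' (by rw [Fin.le_def]; have : a.val ≤ j.val := hj; omega) h1']
            at hcon
          exact absurd hcon (lt_irrefl c)
        · have : j = t₁ := Fin.ext h
          subst this
          exact F7
        · have hjt : t₁ < j := by rw [Fin.lt_def]; omega
          have ht₁'j : t₁' ≤ j := by rw [Fin.le_def]; omega
          have he := ih4 j j' ht₁'j hj'
            (by rw [← F5 j hjt, ← F5 j' (by rw [Fin.lt_def]; omega)]; exact hcon)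
          rw [Hsplit j hjt, Ts_split w θ (m := t₁) (m' := t₁') ht₁a ht₁'v ht₁'j, he]

lemma Icc_zero (j : Fin (n+1)) : Finset.Icc (0 : Fin (n+1)) j = Finset.Iic j := by
  ext i; simp [Finset.mem_Icc, Finset.mem_Iic, Fin.zero_le]

lemma thetaStar_eq (j : Fin (n+1)) : thetaStar w θ j = fA w θ 0 j := by
  have hset : insert j (Finset.Icc (0 : Fin (n+1)) j) = Finset.Iic j := by
    rw [Icc_zero]; exact Finset.insert_eq_self.2 (Finset.mem_Iic.2 le_rfl)
  unfold thetaStar fA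
  exact (Finset.inf'_congr _ rfl (fun t _ =>
    (Finset.sup'_congr _ hset (fun _ _ => rfl)).symm))

/-- the gradient-type quantity -/
noncomputable def gfun (i : Fin (n+1)) : ℝ := w i * fA w θ 0 i - w i * θ i

/-- prefix sums of the gradient -/
noncomputable def Ffun (j : Fin (n+1)) : ℝ := ∑ i ∈ Finset.Iic j, gfun w θ i

lemma Ffun_eq (j : Fin (n+1)) :
    Ffun w θ j = (∑ i ∈ Finset.Icc 0 j, w i * fA w θ 0 i) - Ts w θ 0 j := by
  unfold Ffun gfun Ts
  rw [← Icc_zero j, Finset.sum_sub_distrib]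

lemma Ffun_le (hw : ∀ j, 0 < w j) (j : Fin (n+1)) : Ffun w θ j ≤ 0 := by
  obtain ⟨-, P2, -, -⟩ := pkg w θ hw (n+1) 0 (by simp)
  have := P2 j (Fin.zero_le j)
  rw [Ffun_eq]; linarith

lemma Ffun_last (hw : ∀ j, 0 < w j) : Ffun w θ (Fin.last n) = 0 := by
  obtain ⟨-, -, P3, -⟩ := pkg w θ hw (n+1) 0 (by simp)
  rw [Ffun_eq, P3, sub_self]

lemma Ffun_step (hw : ∀ j, 0 < w j) (j j' : Fin (n+1)) (h : j'.val = j.val + 1)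
    (hlt : fA w θ 0 j < fA w θ 0 j') : Ffun w θ j = 0 := by
  obtain ⟨-, -, -, P4⟩ := pkg w θ hw (n+1) 0 (by simp)
  rw [Ffun_eq, P4 j j' (Fin.zero_le j) h hlt, sub_self]

lemma Iic_zero' : Finset.Iic (0 : Fin (n+1)) = {0} := by
  ext k; simp [Finset.mem_Iic, Fin.le_zero_iff]

lemma Iic_succ (i : Fin n) :
    Finset.Iic i.succ = insert i.succ (Finset.Iic i.castSucc) := by
  ext k
  simp only [Finset.mem_Iic, Finset.mem_insert, Fin.le_def, Fin.val_succ, Fin.coe_castSucc]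
  constructor
  · intro h
    rcases eq_or_lt_of_le h with h | h
    · exact Or.inl (Fin.ext (by simpa using h))
    · exact Or.inr (by omega)
  · rintro (rfl | h)
    · exact le_rfl
    · omega

lemma succ_not_mem (i : Fin n) : i.succ ∉ Finset.Iic i.castSucc := by
  simp [Finset.mem_Iic, Fin.le_def]

lemma abel1 (hw : ∀ j, 0 < w j) (x : Fin (n+1) → ℝ) (hx : Monotone x) (j : Fin (n+1)) :
    x j * Ffun w θ j ≤ ∑ i ∈ Finset.Iic j, x i * gfun w θ i := by
  induction j using Fin.induction with
  | zero =>
    rw [show x 0 * Ffun w θ 0 = x 0 * gfun w θ 0 by rw [Ffun, Iic_zero']; simp,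
      Iic_zero', Finset.sum_singleton]
  | succ i IH =>
    have hFs : Ffun w θ i.succ = gfun w θ i.succ + Ffun w θ i.castSucc := by
      unfold Ffun; rw [Iic_succ, Finset.sum_insert (succ_not_mem i)]
    have hxm : x i.castSucc ≤ x i.succ := hx (by rw [Fin.le_def]; simp)
    have hF0 : Ffun w θ i.castSucc ≤ 0 := Ffun_le w θ hw _
    rw [Iic_succ, Finset.sum_insert (succ_not_mem i), hFs]
    nlinarith [IH]

lemma abel2 (hw : ∀ j, 0 < w j) (j : Fin (n+1)) :
    ∑ i ∈ Finset.Iic j, fA w θ 0 i * gfun w θ i = fA w θ 0 j * Ffun w θ j := by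
  induction j using Fin.induction with
  | zero =>
    rw [show fA w θ 0 0 * Ffun w θ 0 = fA w θ 0 0 * gfun w θ 0 by rw [Ffun, Iic_zero']; simp,
      Iic_zero', Finset.sum_singleton]
  | succ i IH =>
    obtain ⟨P1, -, -, -⟩ := pkg w θ hw (n+1) 0 (by simp)
    have hFs : Ffun w θ i.succ = gfun w θ i.succ + Ffun w θ i.castSucc := by
      unfold Ffun; rw [Iic_succ, Finset.sum_insert (succ_not_mem i)]
    have hkey : fA w θ 0 i.castSucc * Ffun w θ i.castSucc
        = fA w θ 0 i.succ * Ffun w θ i.castSucc := by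
      rcases eq_or_lt_of_le (P1 i.castSucc i.succ (Fin.zero_le _)
        (by rw [Fin.le_def]; simp)) with he | hlt
      · rw [he]
      · rw [Ffun_step w θ hw i.castSucc i.succ (by simp) hlt, mul_zero, mul_zero]
    rw [Iic_succ, Finset.sum_insert (succ_not_mem i), IH, hFs, hkey]
    ring

end Stmt10

/-- Let K ≥ 1, w positive weights, θ ∈ ℝ^K. Then θ* (the min–max vector) is
the unique minimizer of Σ_j w_j (x_j − θ_j)² over the simple order cone
{x : x₁ ≤ ⋯ ≤ x_K}: θ* is feasible (monotone) and strictly beats every other feasible x. -/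
theorem stmt10 (K : ℕ) (hK : 1 ≤ K) (w θ : Fin K → ℝ) (hw : ∀ j, 0 < w j) :
    Monotone (thetaStar w θ) ∧
      ∀ x : Fin K → ℝ, Monotone x → x ≠ thetaStar w θ →
        ∑ j, w j * (thetaStar w θ j - θ j) ^ 2 < ∑ j, w j * (x j - θ j) ^ 2 := by
  obtain ⟨n, rfl⟩ : ∃ n, K = n + 1 := ⟨K - 1, by omega⟩
  obtain ⟨P1, -, -, -⟩ := Stmt10.pkg w θ hw (n+1) 0 (by simp)
  have hts : thetaStar w θ = Stmt10.fA w θ 0 := funext (Stmt10.thetaStar_eq w θ)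
  have huniv : (Finset.univ : Finset (Fin (n+1))) = Finset.Iic (Fin.last n) := by
    ext k; simp [Finset.mem_Iic, Fin.le_last]
  constructor
  · intro j j' hjj'
    rw [hts]
    exact P1 j j' (Fin.zero_le j) hjj'
  · intro x hx hne
    rw [hts] at hne ⊢
    rw [huniv]
    set f := Stmt10.fA w θ 0 with hf
    have h1 : 0 ≤ ∑ i ∈ Finset.Iic (Fin.last n), x i * Stmt10.gfun w θ i := by
      have := Stmt10.abel1 w θ hw x hx (Fin.last n)
      rw [Stmt10.Ffun_last w θ hw, mul_zero] at this
      exact this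
    have h2 : ∑ i ∈ Finset.Iic (Fin.last n), f i * Stmt10.gfun w θ i = 0 := by
      rw [Stmt10.abel2 w θ hw (Fin.last n), Stmt10.Ffun_last w θ hw, mul_zero]
    have hquad : 0 < ∑ i ∈ Finset.Iic (Fin.last n), w i * (x i - f i) ^ 2 := by
      obtain ⟨i, hi⟩ := Function.ne_iff.1 hne
      refine Finset.sum_pos' (fun i _ => mul_nonneg (hw i).le (sq_nonneg _))
        ⟨i, Finset.mem_Iic.2 (Fin.le_last i), ?_⟩
      have hne' : x i - f i ≠ 0 := sub_ne_zero.2 hi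
      exact mul_pos (hw i) (lt_of_le_of_ne (sq_nonneg _) (Ne.symm (pow_ne_zero 2 hne')))
    have hexpand : ∑ i ∈ Finset.Iic (Fin.last n), w i * (x i - θ i) ^ 2
        = (∑ i ∈ Finset.Iic (Fin.last n), w i * (f i - θ i) ^ 2)
          + (∑ i ∈ Finset.Iic (Fin.last n), w i * (x i - f i) ^ 2)
          + 2 * ((∑ i ∈ Finset.Iic (Fin.last n), x i * Stmt10.gfun w θ i)
              - ∑ i ∈ Finset.Iic (Fin.last n), f i * Stmt10.gfun w θ i) := by
      rw [← Finset.sum_sub_distrib, Finset.mul_sum, ← Finset.sum_add_distrib,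
        ← Finset.sum_add_distrib]
      refine Finset.sum_congr rfl (fun i _ => ?_)
      unfold Stmt10.gfun
      rw [← hf]
      ring
    rw [hexpand]
    linarith
end

section
/- Let K ≥ 2, let w₁, …, w_K be positive weights, and let θ ∈ ℝ^K. Suppose an index i with 1 ≤ i ≤ K − 1 satisfies max_{1 ≤ s ≤ i} Av(θ, s, i) < min_{i+1 ≤ t ≤ K} Av(θ, i+1, t). Then the min–max computation splits at i: for every j with 1 ≤ j ≤ i, θ*_j = min_{j ≤ t ≤ i} max_{1 ≤ s ≤ j} Av(θ, s, t), and for every j with i + 1 ≤ j ≤ K, θ*_j = min_{j ≤ t ≤ K} max_{i+1 ≤ s ≤ j} Av(θ, s, t), where θ*_j = min_{j ≤ t ≤ K} max_{1 ≤ s ≤ j} Av(θ, s, t). -/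
private lemma av_between {K : ℕ} (w θ : Fin K → ℝ) (hw : ∀ j, 0 < w j)
    (i : Fin K) (hi : i.val + 1 < K) (s t : Fin K)
    (hs : s ≤ i) (ht : (⟨i.val + 1, hi⟩ : Fin K) ≤ t)
    (h : Av w θ s i ≤ Av w θ ⟨i.val + 1, hi⟩ t) :
    Av w θ s i ≤ Av w θ s t ∧ Av w θ s t ≤ Av w θ ⟨i.val + 1, hi⟩ t := by
  have hun : Finset.Icc s t = Finset.Icc s i ∪ Finset.Icc (⟨i.val + 1, hi⟩ : Fin K) t := by
    ext x
    simp only [Finset.mem_Icc, Finset.mem_union, Fin.le_def] at *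
    omega
  have hdisj : Disjoint (Finset.Icc s i) (Finset.Icc (⟨i.val + 1, hi⟩ : Fin K) t) := by
    rw [Finset.disjoint_left]
    intro a ha hb
    simp only [Finset.mem_Icc, Fin.le_def] at ha hb
    omega
  have hB : 0 < ∑ j ∈ Finset.Icc s i, w j :=
    Finset.sum_pos (fun j _ => hw j) ⟨s, Finset.mem_Icc.mpr ⟨le_refl s, hs⟩⟩
  have hD : 0 < ∑ j ∈ Finset.Icc (⟨i.val + 1, hi⟩ : Fin K) t, w j :=
    Finset.sum_pos (fun j _ => hw j)
      ⟨(⟨i.val + 1, hi⟩ : Fin K), Finset.mem_Icc.mpr ⟨le_refl _, ht⟩⟩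
  set A := ∑ j ∈ Finset.Icc s i, w j * θ j with hA
  set B := ∑ j ∈ Finset.Icc s i, w j with hBdef
  set C := ∑ j ∈ Finset.Icc (⟨i.val + 1, hi⟩ : Fin K) t, w j * θ j with hC
  set D := ∑ j ∈ Finset.Icc (⟨i.val + 1, hi⟩ : Fin K) t, w j with hDdef
  have hAv : Av w θ s t = (A + C) / (B + D) := by
    rw [Av, hun, Finset.sum_union hdisj, Finset.sum_union hdisj]
  have h1 : Av w θ s i = A / B := rfl
  have h2 : Av w θ (⟨i.val + 1, hi⟩ : Fin K) t = C / D := rfl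
  rw [h1, h2] at h ⊢
  rw [hAv]
  rw [div_le_div_iff₀ hB hD] at h
  constructor
  · rw [div_le_div_iff₀ hB (by linarith)]
    nlinarith
  · rw [div_le_div_iff₀ (by linarith) hD]
    nlinarith

/-- Let K ≥ 2, w positive weights, θ ∈ ℝ^K. If a split index i (0-based:
i+1 < K) satisfies max_{s ≤ i} Av(θ, s, i) < min_{i+1 ≤ t} Av(θ, i+1, t), then the
min–max computation splits at i: for j ≤ i, θ*_j = min_{j ≤ t ≤ i} max_{s ≤ j} Av(θ,s,t),
and for j ≥ i+1, θ*_j = min_{j ≤ t} max_{i+1 ≤ s ≤ j} Av(θ,s,t). -/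
theorem stmt11 (K : ℕ) (hK : 2 ≤ K) (w θ : Fin K → ℝ) (hw : ∀ j, 0 < w j)
    (i : Fin K) (hi : i.val + 1 < K)
    (hsplit : Finset.sup' (Finset.Iic i) ⟨i, by simp⟩ (fun s => Av w θ s i) <
      Finset.inf' (Finset.Ici (⟨i.val + 1, hi⟩ : Fin K)) ⟨⟨i.val + 1, hi⟩, by simp⟩
        (fun t => Av w θ ⟨i.val + 1, hi⟩ t)) :
    (∀ j : Fin K, ∀ hji : j ≤ i,
      thetaStar w θ j =
        Finset.inf' (Finset.Icc j i) (Finset.nonempty_Icc.mpr hji) fun t =>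
          Finset.sup' (Finset.Iic j) ⟨j, by simp⟩ fun s => Av w θ s t) ∧
    (∀ j : Fin K, ∀ hij : (⟨i.val + 1, hi⟩ : Fin K) ≤ j,
      thetaStar w θ j =
        Finset.inf' (Finset.Ici j) ⟨j, by simp⟩ fun t =>
          Finset.sup' (Finset.Icc (⟨i.val + 1, hi⟩ : Fin K) j)
            (Finset.nonempty_Icc.mpr hij) fun s => Av w θ s t) := by
  have hkey : ∀ s t : Fin K, s ≤ i → (⟨i.val + 1, hi⟩ : Fin K) ≤ t →
      Av w θ s i < Av w θ ⟨i.val + 1, hi⟩ t := by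
    intro s t hs ht
    calc Av w θ s i ≤ _ := Finset.le_sup' (fun s => Av w θ s i) (Finset.mem_Iic.mpr hs)
      _ < _ := hsplit
      _ ≤ _ := Finset.inf'_le _ (Finset.mem_Ici.mpr ht)
  constructor
  · intro j hji
    rw [thetaStar]
    apply le_antisymm
    · apply Finset.le_inf'
      intro t htm
      exact Finset.inf'_le _ (Finset.mem_Ici.mpr (Finset.mem_Icc.mp htm).1)
    · apply Finset.le_inf'
      intro t htm
      have hjt : j ≤ t := Finset.mem_Ici.mp htm
      by_cases hti : t ≤ i
      · exact Finset.inf'_le _ (Finset.mem_Icc.mpr ⟨hjt, hti⟩)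
      · have ht' : (⟨i.val + 1, hi⟩ : Fin K) ≤ t := by
          simp only [Fin.le_def] at hti ⊢; omega
        have step : (Finset.sup' (Finset.Iic j) ⟨j, by simp⟩ fun s => Av w θ s i) ≤
            Finset.sup' (Finset.Iic j) ⟨j, by simp⟩ fun s => Av w θ s t := by
          apply Finset.sup'_le
          intro s hsm
          have hsi : s ≤ i := le_trans (Finset.mem_Iic.mp hsm) hji
          have hb := (av_between w θ hw i hi s t hsi ht'
            (le_of_lt (hkey s t hsi ht'))).1
          exact le_trans hb (Finset.le_sup' (fun s => Av w θ s t) hsm)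
        calc Finset.inf' (Finset.Icc j i) (Finset.nonempty_Icc.mpr hji)
              (fun t => Finset.sup' (Finset.Iic j) ⟨j, by simp⟩ fun s => Av w θ s t) ≤ _ :=
            Finset.inf'_le _ (Finset.mem_Icc.mpr ⟨hji, le_refl i⟩)
          _ ≤ _ := step
  · intro j hij
    rw [thetaStar]
    apply Finset.inf'_congr _ rfl
    intro t htm
    have hjt : j ≤ t := Finset.mem_Ici.mp htm
    have ht' : (⟨i.val + 1, hi⟩ : Fin K) ≤ t := le_trans hij hjt
    apply le_antisymm
    · apply Finset.sup'_le
      intro s hsm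
      by_cases hsi : s ≤ i
      · have hb := (av_between w θ hw i hi s t hsi ht'
          (le_of_lt (hkey s t hsi ht'))).2
        exact le_trans hb (Finset.le_sup' (fun s => Av w θ s t)
          (Finset.mem_Icc.mpr ⟨le_refl _, hij⟩))
      · have hs' : (⟨i.val + 1, hi⟩ : Fin K) ≤ s := by
          simp only [Fin.le_def] at hsi ⊢; omega
        exact Finset.le_sup' (fun s => Av w θ s t) (Finset.mem_Icc.mpr ⟨hs', Finset.mem_Iic.mp hsm⟩)
    · apply Finset.sup'_le
      intro s hsm
      exact Finset.le_sup' (fun s => Av w θ s t) (Finset.mem_Iic.mpr (Finset.mem_Icc.mp hsm).2)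
end

section
/- Let K ≥ 2, let w₁, …, w_K be positive weights, and let θ ∈ ℝ^K satisfy θ₁ < θ_i for some i ∈ {2, …, K}. Then every minimizer x* of the weighted least squares criterion Σ_{j=1}^{K} w_j (x_j − θ_j)² over the tree order cone C_t = {x ∈ ℝ^K : x₁ ≤ x_j for all j = 2, …, K} is not a constant vector, i.e., there exist indices j, k with x*_j ≠ x*_k. (Consequently the distance test for the tree order alternative is consistent at such θ.) -/
/-- Let K ≥ 2, w positive weights, θ ∈ ℝ^K with θ₁ < θ_i for some
i ∈ {2, …, K} (0-based: θ 0 < θ i for some i ≠ 0). Then every minimizer x* of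
Σ_j w_j (x_j − θ_j)² over the tree order cone {x : x₁ ≤ x_j ∀ j} is not constant:
there exist indices j, k with x*_j ≠ x*_k. -/
theorem stmt12 (K : ℕ) (hK : 2 ≤ K) (w θ : Fin K → ℝ) (hw : ∀ j, 0 < w j)
    (i : Fin K) (hi0 : i ≠ ⟨0, by omega⟩) (hθ : θ ⟨0, by omega⟩ < θ i) :
    ∀ x : Fin K → ℝ, (∀ j, x ⟨0, by omega⟩ ≤ x j) →
      (∀ y : Fin K → ℝ, (∀ j, y ⟨0, by omega⟩ ≤ y j) →
        ∑ j, w j * (x j - θ j) ^ 2 ≤ ∑ j, w j * (y j - θ j) ^ 2) →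
      ∃ j k, x j ≠ x k := by
  set e0 : Fin K := ⟨0, by omega⟩ with he0
  intro x hx hmin
  by_contra h
  push_neg at h
  have hconst : ∀ j, x j = x e0 := fun j => h j e0
  have hsum : ∀ (a : Fin K) (v : ℝ),
      ∑ j, w j * (Function.update x a v j - θ j) ^ 2
        = w a * (v - θ a) ^ 2 + ∑ j ∈ {a}ᶜ, w j * (x j - θ j) ^ 2 := by
    intro a v
    rw [Fintype.sum_eq_add_sum_compl a]
    congr 1
    · simp
    · apply Finset.sum_congr rfl
      intro j hj
      rw [Function.update_of_ne (Finset.mem_compl.mp hj ∘ Finset.mem_singleton.mpr)]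
  rcases lt_or_ge (x e0) (θ i) with hc | hc
  · -- move coordinate i up to θ i
    set y := Function.update x i (θ i) with hy
    have hcone : ∀ j, y e0 ≤ y j := by
      intro j
      rw [hy, Function.update_of_ne hi0.symm]
      by_cases hji : j = i
      · subst hji; rw [Function.update_self]; exact hc.le
      · rw [Function.update_of_ne hji]; exact hx j
    have := hmin y hcone
    rw [hy, hsum i (θ i), Fintype.sum_eq_add_sum_compl i
      (fun j => w j * (x j - θ j) ^ 2)] at this
    have h1 : w i * (x i - θ i) ^ 2 ≤ w i * (θ i - θ i) ^ 2 := by linarith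
    have h2 : x i ≠ θ i := by rw [hconst i]; exact hc.ne
    nlinarith [hw i, sq_nonneg (x i - θ i), sub_ne_zero.mpr h2,
      pow_pos (abs_pos.mpr (sub_ne_zero.mpr h2)) 2, sq_abs (x i - θ i)]
  · -- move coordinate 0 down to θ 0
    set y := Function.update x e0 (θ e0) with hy
    have hcone : ∀ j, y e0 ≤ y j := by
      intro j
      rw [hy, Function.update_self]
      by_cases hj0 : j = e0
      · subst hj0; rw [Function.update_self]
      · rw [Function.update_of_ne hj0, hconst j]
        linarith [hx i, hconst i]
    have := hmin y hcone
    rw [hy, hsum e0 (θ e0), Fintype.sum_eq_add_sum_compl e0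
      (fun j => w j * (x j - θ j) ^ 2)] at this
    have h2 : x e0 ≠ θ e0 := by
      have : θ e0 < x e0 := lt_of_lt_of_le hθ (by rw [← hconst i]; linarith [hconst i])
      exact this.ne'
    nlinarith [hw e0, sub_ne_zero.mpr h2, sq_abs (x e0 - θ e0),
      pow_pos (abs_pos.mpr (sub_ne_zero.mpr h2)) 2]
end

section
/- Let μ denote the standard Gaussian measure on ℝ (mean 0, variance 1) and let μ² = μ ⊗ μ be the corresponding product measure on ℝ² (a standard bivariate normal). Then for any c_α > 0 and c_γ > 0, μ²{x ∈ ℝ² : x₁₊² + x₂₊² ≥ c_α and x₁₋² + x₂₋² < c_γ} = μ²{x ∈ ℝ² : x₁₊² + x₂₊² ≥ c_α} − 2 · μ([√c_α, ∞)) · μ([√c_γ, ∞)). (This is the identity α^SAFE = α − 2(1 − Φ(√c_α))(1 − Φ(√c_γ)) for the level of the safe test in two dimensions.) -/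
open MeasureTheory ProbabilityTheory

lemma gauss_symm (a : ℝ) :
    gaussianReal 0 1 (Set.Iic (-a)) = gaussianReal 0 1 (Set.Ici a) := by
  have h : (gaussianReal 0 1).map (fun x : ℝ => (-1) * x) = gaussianReal 0 1 := by
    rw [gaussianReal_map_const_mul (-1)]
    norm_num
  have := Measure.map_apply (f := fun x : ℝ => (-1) * x)
    (measurable_id.const_mul _) (μ := gaussianReal 0 1) (measurableSet_Ici (a := a))
  rw [h] at this
  rw [this]
  congr 1
  ext x
  simp [le_neg]

/-- Let μ be the standard Gaussian measure on ℝ and μ² = μ ⊗ μ on ℝ².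
For any c_α > 0 and c_γ > 0,
μ²{x : x₁₊² + x₂₊² ≥ c_α ∧ x₁₋² + x₂₋² < c_γ}
  = μ²{x : x₁₊² + x₂₊² ≥ c_α} − 2 · μ([√c_α, ∞)) · μ([√c_γ, ∞)).
This is the identity α^SAFE = α − 2(1 − Φ(√c_α))(1 − Φ(√c_γ)). -/
theorem stmt15 (cα cγ : ℝ) (hcα : 0 < cα) (hcγ : 0 < cγ) :
    ((gaussianReal 0 1).prod (gaussianReal 0 1))
        {x : ℝ × ℝ | cα ≤ max x.1 0 ^ 2 + max x.2 0 ^ 2 ∧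
          max (-x.1) 0 ^ 2 + max (-x.2) 0 ^ 2 < cγ} =
      ((gaussianReal 0 1).prod (gaussianReal 0 1))
          {x : ℝ × ℝ | cα ≤ max x.1 0 ^ 2 + max x.2 0 ^ 2} -
        2 * gaussianReal 0 1 (Set.Ici (Real.sqrt cα)) *
          gaussianReal 0 1 (Set.Ici (Real.sqrt cγ)) := by
  set ν := (gaussianReal 0 1).prod (gaussianReal 0 1) with hν
  set A : Set (ℝ × ℝ) := {x : ℝ × ℝ | cα ≤ max x.1 0 ^ 2 + max x.2 0 ^ 2} with hA
  set C : Set (ℝ × ℝ) := {x : ℝ × ℝ | cα ≤ max x.1 0 ^ 2 + max x.2 0 ^ 2 ∧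
      cγ ≤ max (-x.1) 0 ^ 2 + max (-x.2) 0 ^ 2} with hC
  have hsa := Real.sqrt_pos.mpr hcα
  have hsg := Real.sqrt_pos.mpr hcγ
  -- C as a union of two rectangles
  have hCeq : C = (Set.Ici (Real.sqrt cα) ×ˢ Set.Iic (-Real.sqrt cγ)) ∪
      (Set.Iic (-Real.sqrt cγ) ×ˢ Set.Ici (Real.sqrt cα)) := by
    ext ⟨x, y⟩
    simp only [hC, Set.mem_setOf_eq, Set.mem_union, Set.mem_prod, Set.mem_Ici, Set.mem_Iic]
    constructor
    · rintro ⟨h1, h2⟩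
      rcases le_or_gt 0 x with hx | hx
      · left
        have hmx : max (-x) 0 = 0 := max_eq_right (by linarith)
        rw [hmx] at h2
        have h2' : cγ ≤ max (-y) 0 ^ 2 := by simpa using h2
        have hy : Real.sqrt cγ ≤ max (-y) 0 := by
          have := Real.sqrt_le_sqrt h2'
          rwa [Real.sqrt_sq (le_max_right _ _)] at this
        have hy2 : Real.sqrt cγ ≤ -y := by
          rcases max_cases (-y) 0 with ⟨he, _⟩ | ⟨he, _⟩ <;> rw [he] at hy <;> linarith
        have hyneg : y < 0 := by linarith
        have hmy : max y 0 = 0 := max_eq_right hyneg.le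
        rw [hmy] at h1
        have h1' : cα ≤ max x 0 ^ 2 := by simpa using h1
        have hx' : Real.sqrt cα ≤ max x 0 := by
          have := Real.sqrt_le_sqrt h1'
          rwa [Real.sqrt_sq (le_max_right _ _)] at this
        have : Real.sqrt cα ≤ x := by
          rcases max_cases x 0 with ⟨he, _⟩ | ⟨he, _⟩ <;> rw [he] at hx' <;> linarith
        exact ⟨this, by linarith⟩
      · right
        have hmx : max x 0 = 0 := max_eq_right hx.le
        rw [hmx] at h1
        have h1' : cα ≤ max y 0 ^ 2 := by simpa using h1
        have hy : Real.sqrt cα ≤ max y 0 := by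
          have := Real.sqrt_le_sqrt h1'
          rwa [Real.sqrt_sq (le_max_right _ _)] at this
        have hy2 : Real.sqrt cα ≤ y := by
          rcases max_cases y 0 with ⟨he, _⟩ | ⟨he, _⟩ <;> rw [he] at hy <;> linarith
        have hmy : max (-y) 0 = 0 := max_eq_right (by linarith)
        rw [hmy] at h2
        have h2' : cγ ≤ max (-x) 0 ^ 2 := by simpa using h2
        have hx' : Real.sqrt cγ ≤ max (-x) 0 := by
          have := Real.sqrt_le_sqrt h2'
          rwa [Real.sqrt_sq (le_max_right _ _)] at this
        have : Real.sqrt cγ ≤ -x := by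
          rcases max_cases (-x) 0 with ⟨he, _⟩ | ⟨he, _⟩ <;> rw [he] at hx' <;> linarith
        exact ⟨by linarith, hy2⟩
    · rintro (⟨h1, h2⟩ | ⟨h1, h2⟩)
      · have hx : max x 0 = x := max_eq_left (by linarith)
        have hy : max (-y) 0 = -y := max_eq_left (by linarith)
        constructor
        · rw [hx]
          have : cα ≤ x ^ 2 := by
            calc cα = Real.sqrt cα ^ 2 := (Real.sq_sqrt hcα.le).symm
            _ ≤ x ^ 2 := by nlinarith
          nlinarith [sq_nonneg (max y 0)]
        · rw [hy]
          have : cγ ≤ (-y) ^ 2 := by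
            calc cγ = Real.sqrt cγ ^ 2 := (Real.sq_sqrt hcγ.le).symm
            _ ≤ (-y) ^ 2 := by nlinarith
          nlinarith [sq_nonneg (max (-x) 0)]
      · have hy : max y 0 = y := max_eq_left (by linarith)
        have hx : max (-x) 0 = -x := max_eq_left (by linarith)
        constructor
        · rw [hy]
          have : cα ≤ y ^ 2 := by
            calc cα = Real.sqrt cα ^ 2 := (Real.sq_sqrt hcα.le).symm
            _ ≤ y ^ 2 := by nlinarith
          nlinarith [sq_nonneg (max x 0)]
        · rw [hx]
          have : cγ ≤ (-x) ^ 2 := by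
            calc cγ = Real.sqrt cγ ^ 2 := (Real.sq_sqrt hcγ.le).symm
            _ ≤ (-x) ^ 2 := by nlinarith
          nlinarith [sq_nonneg (max (-y) 0)]
  -- measure of C
  have hdisj : Disjoint (Set.Ici (Real.sqrt cα) ×ˢ Set.Iic (-Real.sqrt cγ))
      ((Set.Iic (-Real.sqrt cγ)) ×ˢ Set.Ici (Real.sqrt cα)) := by
    rw [Set.disjoint_left]
    rintro ⟨x, y⟩ ⟨h1, _⟩ ⟨h3, _⟩
    simp only [Set.mem_Ici, Set.mem_Iic] at h1 h3
    linarith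
  have hνC : ν C = 2 * gaussianReal 0 1 (Set.Ici (Real.sqrt cα)) *
      gaussianReal 0 1 (Set.Ici (Real.sqrt cγ)) := by
    rw [hCeq, measure_union hdisj ((measurableSet_Iic).prod (measurableSet_Ici)),
      Measure.prod_prod, Measure.prod_prod, gauss_symm]
    ring
  -- measurability
  have hmA : MeasurableSet A := by
    apply measurableSet_le measurable_const
    exact ((measurable_fst.max measurable_const).pow_const 2).add
      ((measurable_snd.max measurable_const).pow_const 2)
  have hmB : MeasurableSet {x : ℝ × ℝ | max (-x.1) 0 ^ 2 + max (-x.2) 0 ^ 2 < cγ} := by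
    apply measurableSet_lt _ measurable_const
    exact ((measurable_fst.neg.max measurable_const).pow_const 2).add
      ((measurable_snd.neg.max measurable_const).pow_const 2)
  -- split A
  have hsplit : {x : ℝ × ℝ | cα ≤ max x.1 0 ^ 2 + max x.2 0 ^ 2 ∧
      max (-x.1) 0 ^ 2 + max (-x.2) 0 ^ 2 < cγ} = A \ C := by
    ext ⟨x, y⟩
    simp only [hA, hC, Set.mem_setOf_eq, Set.mem_diff, not_and, not_le]
    constructor
    · rintro ⟨h1, h2⟩; exact ⟨h1, fun _ => h2⟩
    · rintro ⟨h1, h2⟩; exact ⟨h1, h2 h1⟩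
  have hCsub : C ⊆ A := fun x hx => hx.1
  have hmC : MeasurableSet C := by
    rw [hCeq]
    exact ((measurableSet_Ici).prod (measurableSet_Iic)).union
      ((measurableSet_Iic).prod (measurableSet_Ici))
  rw [hsplit, measure_diff hCsub hmC.nullMeasurableSet (measure_ne_top ν C), hνC]
end
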